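/- arXiv:2501.14313 — 3 statements merged into one kernel-verified Lean document; each statement's English description precedes it below -/
import Mathlib

section
/- Let S ⊆ {1,…,n} with t_ℓ, t_r ∈ S, t_ℓ ≤ p ≤ t_r, and suppose S^{(ℓ)} = S ∩ [1, t_ℓ] and S^{(r)} = S ∩ [t_r, n] form a partition of S. Then I(X_p⇝X_S) ≤ I(X_p⇝X_{S^{(ℓ)}}) + I(X_p⇝X_{S^{(r)}}), and if t_r − t_ℓ is even, equality holds: I(X_p⇝X_S) = I(X_p⇝X_{S^{(ℓ)}}) + I(X_p⇝X_{S^{(r)}}). -/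
open Finset
open scoped Classical

noncomputable section

/-- Transition matrix of the two-state Markov chain:
`transP α β i j = Pr(X_{t+1} = j | X_t = i)` with `false ↔ 0`, `true ↔ 1`. -/
def transP (α β : ℝ) : Bool → Bool → ℝ
  | false, false => 1 - α
  | false, true  => α
  | true,  false => β
  | true,  true  => 1 - β

/-- Stationary distribution of the chain. -/
def statDist (α β : ℝ) : Bool → ℝ
  | false => β / (α + β)
  | true  => α / (α + β)

/-- Joint pmf of the stationary Markov chain `X_1, …, X_n` (0-indexed in Lean). -/
def jointX (α β : ℝ) {n : ℕ} (x : Fin n → Bool) : ℝ :=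
  if h : 0 < n then
    statDist α β (x ⟨0, h⟩) *
      ∏ i : Fin (n - 1),
        transP α β (x ⟨i.1, by have := i.2; omega⟩) (x ⟨i.1 + 1, by have := i.2; omega⟩)
  else 1

/-- Probability of an event under the chain. -/
def prX (α β : ℝ) {n : ℕ} (E : Set (Fin n → Bool)) : ℝ :=
  ∑ x : Fin n → Bool, E.indicator (jointX α β) x

/-- Conditional probability of the event `E` given the event `C`. -/
def condProb (α β : ℝ) {n : ℕ} (E C : Set (Fin n → Bool)) : ℝ :=
  prX α β (E ∩ C) / prX α β C

/-- `log (a / b)` valued in the extended reals: `⊥` when `a = 0` and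
`⊤` when `a > 0 = b` (ratios of probabilities, so nonnegative inputs). -/
def logRatio (a b : ℝ) : EReal :=
  if a ≤ 0 then ⊥ else if b ≤ 0 then ⊤ else ((Real.log (a / b) : ℝ) : EReal)

/-- Pointwise influence `i(X_p ⇝ X_S = g_S)`. -/
def pwInfl (α β : ℝ) {n : ℕ} (p : Fin n) (S : Finset (Fin n)) (g : Fin n → Bool) : EReal :=
  max
    (logRatio (condProb α β {x | ∀ t ∈ S, x t = g t} {x | x p = true})
              (condProb α β {x | ∀ t ∈ S, x t = g t} {x | x p = false}))
    (logRatio (condProb α β {x | ∀ t ∈ S, x t = g t} {x | x p = false})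
              (condProb α β {x | ∀ t ∈ S, x t = g t} {x | x p = true}))

/-- Pointwise influence on a single record: `i(X_p ⇝ X_t = b)`. -/
def pwInfl1 (α β : ℝ) {n : ℕ} (p t : Fin n) (b : Bool) : EReal :=
  pwInfl α β p {t} (fun _ => b)

/-- Max-influence `I(X_p ⇝ X_S)`. -/
def maxInfl (α β : ℝ) {n : ℕ} (p : Fin n) (S : Finset (Fin n)) : EReal :=
  ⨆ g : Fin n → Bool, pwInfl α β p S g

/-- Kernel of a local redaction mechanism with redaction probabilities
`r t x = Pr(Y_t = ⊥ | X_t = x)`: probability of the output `y` given the data `x`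
(`none` encodes the erasure symbol `⊥`). -/
def mechK {n : ℕ} (r : Fin n → Bool → ℝ) (x : Fin n → Bool) (y : Fin n → Option Bool) : ℝ :=
  ∏ t, (y t).elim (r t (x t)) (fun b => if b = x t then 1 - r t (x t) else 0)

/-- The redaction probabilities are genuine probabilities. -/
def validMech {n : ℕ} (r : Fin n → Bool → ℝ) : Prop :=
  ∀ t x, 0 ≤ r t x ∧ r t x ≤ 1

/-- Data-independent mechanism: the redaction probability does not depend on the data. -/
def dataIndep {n : ℕ} (r : Fin n → Bool → ℝ) : Prop :=
  ∀ t, r t false = r t true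

/-- Joint probability `Pr(X ∈ E, Y ∈ F)`. -/
def prXY (α β : ℝ) {n : ℕ} (r : Fin n → Bool → ℝ) (E : Set (Fin n → Bool))
    (F : Set (Fin n → Option Bool)) : ℝ :=
  ∑ x : Fin n → Bool, ∑ y : Fin n → Option Bool,
    E.indicator (jointX α β) x * F.indicator (mechK r x) y

/-- Output probability `Pr(Y ∈ F)`. -/
def prY (α β : ℝ) {n : ℕ} (r : Fin n → Bool → ℝ) (F : Set (Fin n → Option Bool)) : ℝ :=
  prXY α β r Set.univ F

/-- Conditional output probability `Pr(Y ∈ F | X_p = a)`. -/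
def condY (α β : ℝ) {n : ℕ} (r : Fin n → Bool → ℝ) (p : Fin n) (a : Bool)
    (F : Set (Fin n → Option Bool)) : ℝ :=
  prXY α β r {x | x p = a} F / prX α β {x | x p = a}

/-- Privacy leakage `L(X_p → Y_T)` of the marginal output on the index set `T`:
`log sup_{y_T ∈ supp, a} Pr(Y_T = y_T | X_p = a)/Pr(Y_T = y_T | X_p = ¬a)`. -/
def leakOn (α β : ℝ) {n : ℕ} (r : Fin n → Bool → ℝ) (p : Fin n) (T : Finset (Fin n)) : EReal :=
  ⨆ g : Fin n → Option Bool, ⨆ a : Bool,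
    logRatio (condY α β r p a {y | ∀ t ∈ T, y t = g t})
             (condY α β r p (!a) {y | ∀ t ∈ T, y t = g t})

/-- Privacy leakage `L(X_p → Y)`. -/
def leak (α β : ℝ) {n : ℕ} (r : Fin n → Bool → ℝ) (p : Fin n) : EReal :=
  leakOn α β r p univ

/-- Utility: expected fraction of correctly released records. -/
def utility (α β : ℝ) {n : ℕ} (r : Fin n → Bool → ℝ) : ℝ :=
  (1 / (n : ℝ)) * ∑ x : Fin n → Bool, ∑ y : Fin n → Option Bool,
    jointX α β x * mechK r x y * ∑ t, (if y t = some (x t) then (1 : ℝ) else 0)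

/-- Large-leakage region `R_{L|ε'}`. -/
def regL (α β : ℝ) {n : ℕ} (p : Fin n) (ε' : ℝ) : Finset (Fin n) :=
  univ.filter fun t =>
    (ε' : EReal) < pwInfl1 α β p t false ∧ pwInfl1 α β p t false ≤ pwInfl1 α β p t true

/-- Medium-leakage region `R_{M|ε'}`. -/
def regM (α β : ℝ) {n : ℕ} (p : Fin n) (ε' : ℝ) : Finset (Fin n) :=
  univ.filter fun t =>
    pwInfl1 α β p t false ≤ (ε' : EReal) ∧ (ε' : EReal) < pwInfl1 α β p t true

/-- Small-leakage region `R_{S|ε'}`. -/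
def regS (α β : ℝ) {n : ℕ} (p : Fin n) (ε' : ℝ) : Finset (Fin n) :=
  univ.filter fun t =>
    pwInfl1 α β p t false ≤ pwInfl1 α β p t true ∧ pwInfl1 α β p t true ≤ (ε' : EReal)

/-- `Q^{(ℓ)}`: elements of `Q` left of `p` (inclusive). -/
def leftOf {n : ℕ} (p : Fin n) (Q : Finset (Fin n)) : Finset (Fin n) := Q.filter (· ≤ p)

/-- `Q^{(r)}`: elements of `Q` right of `p` (inclusive). -/
def rightOf {n : ℕ} (p : Fin n) (Q : Finset (Fin n)) : Finset (Fin n) := Q.filter (p ≤ ·)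

/-- The region `S = R_{S|ε_ℓ}^{(ℓ)} ∪ R_{S|ε_r}^{(r)}` of a 3R mechanism. -/
def set3S (α β : ℝ) {n : ℕ} (p : Fin n) (εl εr : ℝ) : Finset (Fin n) :=
  leftOf p (regS α β p εl) ∪ rightOf p (regS α β p εr)

/-- The region `M = R_{M|ε_ℓ}^{(ℓ)} ∪ R_{M|ε_r}^{(r)}` of a 3R mechanism. -/
def set3M (α β : ℝ) {n : ℕ} (p : Fin n) (εl εr : ℝ) : Finset (Fin n) :=
  leftOf p (regM α β p εl) ∪ rightOf p (regM α β p εr)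

/-- The region `L = R_{L|ε_ℓ}^{(ℓ)} ∪ R_{L|ε_r}^{(r)}` of a 3R mechanism. -/
def set3L (α β : ℝ) {n : ℕ} (p : Fin n) (εl εr : ℝ) : Finset (Fin n) :=
  leftOf p (regL α β p εl) ∪ rightOf p (regL α β p εr)

/-- `r` is the 3R mechanism with regions `S`, `M`, `L` and redaction parameters `q`. -/
def is3R {n : ℕ} (r : Fin n → Bool → ℝ) (S M L : Finset (Fin n)) (q : Fin n → ℝ) : Prop :=
  ∀ t, (t ∈ L → ∀ x, r t x = 1) ∧ (t ∈ S → ∀ x, r t x = 0) ∧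
    (t ∈ M → r t false = q t ∧ r t true = 1)

/-- Closed form `i_low(Δ)`. -/
def iLow (α β : ℝ) (Δ : ℕ) : ℝ :=
  |Real.log ((1 + (α / β) * (1 - α - β) ^ Δ) / (1 - (1 - α - β) ^ Δ))|

/-- Closed form `i_high(Δ)`. -/
def iHigh (α β : ℝ) (Δ : ℕ) : ℝ :=
  |Real.log ((1 + (β / α) * (1 - α - β) ^ Δ) / (1 - (1 - α - β) ^ Δ))|

section Aux

/-- constraint indicator -/
def cind : Option Bool → Bool → ℝ
  | none, _ => 1
  | some b, u => if u = b then 1 else 0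

/-- forward DP vector of the constrained chain -/
def dpv (α β : ℝ) (A : ℕ → Option Bool) : ℕ → Bool → ℝ
  | 0, u => cind (A 0) u * statDist α β u
  | (j+1), u => cind (A (j+1)) u * ∑ w, dpv α β A j w * transP α β w u

/-- matrix power of the transition matrix -/
def Pm (α β : ℝ) : ℕ → Bool → Bool → ℝ
  | 0, u, v => if v = u then 1 else 0
  | (d+1), u, v => ∑ w, Pm α β d u w * transP α β w v

lemma transP_row_sum (α β : ℝ) (u : Bool) : ∑ v, transP α β u v = 1 := by
  cases u <;> simp [transP, Fintype.sum_bool] <;> ring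

lemma statDist_stationary (α β : ℝ) (hab : α + β ≠ 0) (u : Bool) :
    ∑ w, statDist α β w * transP α β w u = statDist α β u := by
  cases u <;> simp [statDist, transP, Fintype.sum_bool] <;> field_simp <;> ring

lemma transP_pos (α β : ℝ) (hα : 0 < α) (hαβ : α ≤ β) (hβ : β < 1) (u v : Bool) :
    0 < transP α β u v := by
  cases u <;> cases v <;> simp [transP] <;> linarith

lemma statDist_pos (α β : ℝ) (hα : 0 < α) (hαβ : α ≤ β) (hβ : β < 1) (u : Bool) :
    0 < statDist α β u := by
  have hb : 0 < β := lt_of_lt_of_le hα hαβ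
  cases u <;> simp [statDist] <;> positivity

lemma jointX_succ (α β : ℝ) (m : ℕ) (x : Fin (m+1) → Bool) :
    jointX α β x = statDist α β (x 0) * ∏ i : Fin m,
      transP α β (x ⟨i.1, by omega⟩) (x ⟨i.1+1, by omega⟩) := by
  rw [jointX, dif_pos (Nat.succ_pos m)]
  rfl

lemma jointX_pos (α β : ℝ) (hα : 0 < α) (hαβ : α ≤ β) (hβ : β < 1)
    {n : ℕ} (x : Fin n → Bool) : 0 < jointX α β x := by
  rw [jointX]
  split
  · exact mul_pos (statDist_pos α β hα hαβ hβ _)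
      (Finset.prod_pos fun i _ => transP_pos α β hα hαβ hβ _ _)
  · exact one_pos

lemma jointX_snoc (α β : ℝ) (m : ℕ) (y : Fin (m+1) → Bool) (b : Bool) :
    jointX α β (Fin.snoc y b) = jointX α β y * transP α β (y (Fin.last m)) b := by
  rw [jointX_succ, jointX_succ, Fin.prod_univ_castSucc]
  have hl : ∀ (k : ℕ) (hk : k < m+2) (hk' : k < m+1),
      (Fin.snoc y b : Fin (m+2) → Bool) ⟨k, hk⟩ = y ⟨k, hk'⟩ := by
    intro k hk hk'
    have : (⟨k, hk⟩ : Fin (m+2)) = Fin.castSucc ⟨k, hk'⟩ := rfl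
    rw [this, Fin.snoc_castSucc]
  have hlast : (Fin.snoc y b : Fin (m+2) → Bool) ⟨m+1, by omega⟩ = b := by
    have : (⟨m+1, by omega⟩ : Fin (m+2)) = Fin.last (m+1) := rfl
    rw [this, Fin.snoc_last]
  have h0 : (Fin.snoc y b : Fin (m+2) → Bool) 0 = y 0 := by
    have : (0 : Fin (m+2)) = Fin.castSucc 0 := rfl
    rw [this, Fin.snoc_castSucc]
  rw [h0]
  have hprod : ∀ i : Fin m,
      transP α β ((Fin.snoc y b : Fin (m+2) → Bool) ⟨(Fin.castSucc i).1, by omega⟩)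
        ((Fin.snoc y b : Fin (m+2) → Bool) ⟨(Fin.castSucc i).1+1, by omega⟩)
      = transP α β (y ⟨i.1, by omega⟩) (y ⟨i.1+1, by omega⟩) := by
    intro i
    simp only [Fin.coe_castSucc]
    rw [hl _ _ (by have := i.2; omega), hl _ _ (by have := i.2; omega)]
  rw [Finset.prod_congr rfl (fun i _ => hprod i)]
  simp only [Fin.val_last]
  rw [hl m (by omega) (by omega), hlast]
  have : y ⟨m, by omega⟩ = y (Fin.last m) := rfl
  rw [this]; ring

end Aux
section Aux2

lemma master' (α β : ℝ) :
    ∀ (m : ℕ) (A : ℕ → Option Bool) (f : Bool → ℝ),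
      (∑ x : Fin (m+1) → Bool,
        (∏ j : Fin (m+1), cind (A j.1) (x j)) * jointX α β x * f (x (Fin.last m)))
      = ∑ u, dpv α β A m u * f u := by
  intro m
  induction m with
  | zero =>
    intro A f
    rw [← (Equiv.funUnique (Fin 1) Bool).symm.sum_comp]
    apply Fintype.sum_congr
    intro u
    simp [jointX_succ, dpv, Equiv.funUnique, Fin.last]
  | succ m ih =>
    intro A f
    rw [← (Fin.insertNthEquiv (fun _ => Bool) (Fin.last (m+1))).sum_comp,
      Fintype.sum_prod_type]
    have key : ∀ (b : Bool) (y : Fin (m+1) → Bool),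
        (Fin.insertNthEquiv (fun _ => Bool) (Fin.last (m+1))) (b, y)
          = Fin.snoc y b := by
      intro b y
      rw [show (Fin.insertNthEquiv (fun _ => Bool) (Fin.last (m+1))) (b, y)
            = (Fin.last (m+1)).insertNth b y from rfl, Fin.insertNth_last']
    calc (∑ b, ∑ y : Fin (m+1) → Bool,
          (∏ j : Fin (m+2), cind (A j.1)
              (((Fin.insertNthEquiv (fun _ => Bool) (Fin.last (m+1))) (b, y)) j)) *
            jointX α β ((Fin.insertNthEquiv (fun _ => Bool) (Fin.last (m+1))) (b, y)) *
            f (((Fin.insertNthEquiv (fun _ => Bool) (Fin.last (m+1))) (b, y)) (Fin.last (m+1))))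
        = ∑ b, ∑ y : Fin (m+1) → Bool,
            ((∏ j : Fin (m+1), cind (A j.1) (y j)) * jointX α β y *
              (transP α β (y (Fin.last m)) b)) * (cind (A (m+1)) b * f b) := by
          apply Fintype.sum_congr; intro b
          apply Fintype.sum_congr; intro y
          rw [key b y, jointX_snoc]
          rw [Fin.prod_univ_castSucc]
          have h1 : ∀ j : Fin (m+1),
              cind (A (↑(Fin.castSucc j))) ((Fin.snoc y b : Fin (m+2) → Bool) (Fin.castSucc j))
                = cind (A j.1) (y j) := by
            intro j; rw [Fin.snoc_castSucc, Fin.coe_castSucc]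
          rw [Finset.prod_congr rfl (fun j _ => h1 j)]
          rw [Fin.snoc_last, Fin.val_last]
          ring
      _ = ∑ b, (∑ u, dpv α β A m u * transP α β u b) * (cind (A (m+1)) b * f b) := by
          apply Fintype.sum_congr; intro b
          rw [← Finset.sum_mul]
          congr 1
          exact ih A (fun u => transP α β u b)
      _ = ∑ u, dpv α β A (m+1) u * f u := by
          apply Fintype.sum_congr; intro b
          show (∑ u, dpv α β A m u * transP α β u b) * (cind (A (m+1)) b * f b)
            = cind (A (m+1)) b * (∑ w, dpv α β A m w * transP α β w b) * f b
          ring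

lemma prX_eq_dpv (α β : ℝ) {m : ℕ} (A : ℕ → Option Bool) (E : Set (Fin (m+1) → Bool))
    (hE : ∀ x, x ∈ E ↔ ∀ (j : Fin (m+1)) (b : Bool), A j.1 = some b → x j = b) :
    prX α β E = ∑ u, dpv α β A m u := by
  have := master' α β m A (fun _ => 1)
  simp only [mul_one] at this
  rw [prX, ← this]
  apply Fintype.sum_congr
  intro x
  by_cases hx : x ∈ E
  · rw [Set.indicator_of_mem hx]
    have : (∏ j : Fin (m+1), cind (A j.1) (x j)) = 1 := by
      apply Finset.prod_eq_one
      intro j _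
      rcases hA : A j.1 with _ | b
      · rfl
      · simp [cind, (hE x).1 hx j b hA]
    rw [this, one_mul]
  · rw [Set.indicator_of_notMem hx]
    rw [hE x] at hx
    push_neg at hx
    obtain ⟨j, b, hj, hxj⟩ := hx
    have : (∏ j : Fin (m+1), cind (A j.1) (x j)) = 0 := by
      apply Finset.prod_eq_zero (Finset.mem_univ j)
      simp [hj, cind, hxj]
    rw [this, zero_mul]

end Aux2
section Aux3

variable {α β : ℝ}

lemma dpv_congr {A A' : ℕ → Option Bool} :
    ∀ (j : ℕ), (∀ k ≤ j, A k = A' k) → ∀ u, dpv α β A j u = dpv α β A' j u := by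
  intro j
  induction j with
  | zero => intro h u; simp [dpv, h 0 (le_refl 0)]
  | succ j ih =>
    intro h u
    simp only [dpv, h (j+1) (le_refl _)]
    congr 1
    apply Fintype.sum_congr
    intro w
    rw [ih (fun k hk => h k (by omega)) w]

lemma dpv_free (hab : α + β ≠ 0) {A : ℕ → Option Bool} :
    ∀ (j : ℕ), (∀ k ≤ j, A k = none) → ∀ u, dpv α β A j u = statDist α β u := by
  intro j
  induction j with
  | zero => intro h u; simp [dpv, h 0 (le_refl 0), cind]
  | succ j ih =>
    intro h u
    simp only [dpv, h (j+1) (le_refl _), cind, one_mul]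
    rw [Fintype.sum_congr _ _ (fun w => by
      rw [ih (fun k hk => h k (by omega)) w])]
    exact statDist_stationary α β hab u

lemma dpv_pin (hab : α + β ≠ 0) {A : ℕ → Option Bool} {j : ℕ} {u0 : Bool}
    (hfree : ∀ k < j, A k = none) (hj : A j = some u0) (u : Bool) :
    dpv α β A j u = if u = u0 then statDist α β u0 else 0 := by
  cases j with
  | zero =>
    simp only [dpv, hj, cind]
    split_ifs with h
    · subst h; ring
    · ring
  | succ j =>
    simp only [dpv, hj, cind]
    rw [Fintype.sum_congr _ _ (fun w => by
      rw [dpv_free hab j (fun k hk => hfree k (by omega)) w])]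
    rw [statDist_stationary α β hab u]
    split_ifs with h
    · subst h; ring
    · ring

lemma dpv_pinned_at {A : ℕ → Option Bool} {j : ℕ} {u0 : Bool} (hj : A j = some u0) (u : Bool) :
    dpv α β A j u = if u = u0 then dpv α β A j u0 else 0 := by
  split_ifs with h
  · subst h; rfl
  · cases j <;> simp [dpv, hj, cind, h]

lemma dpv_sum_tail {A : ℕ → Option Bool} (j : ℕ) :
    ∀ (d : ℕ), (∀ k, j < k → k ≤ j + d → A k = none) →
      (∑ u, dpv α β A (j+d) u) = ∑ u, dpv α β A j u := by
  intro d
  induction d with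
  | zero => intro _; rfl
  | succ d ih =>
    intro h
    have : j + (d+1) = (j+d) + 1 := by omega
    rw [this]
    show (∑ u, dpv α β A ((j+d)+1) u) = _
    have h1 : A ((j+d)+1) = none := h _ (by omega) (by omega)
    simp only [dpv, h1, cind, one_mul]
    rw [Finset.sum_comm]
    rw [Fintype.sum_congr _ _ (fun w => by
      rw [← Finset.mul_sum, transP_row_sum α β w, mul_one])]
    exact ih (fun k hk1 hk2 => h k hk1 (by omega))

lemma Pm_one (u v : Bool) : Pm α β 1 u v = transP α β u v := by
  cases u <;> simp [Pm, Fintype.sum_bool]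

lemma Pm_pos (hα : 0 < α) (hαβ : α ≤ β) (hβ : β < 1) :
    ∀ (d : ℕ), 0 < d → ∀ (u v : Bool), 0 < Pm α β d u v := by
  intro d
  induction d with
  | zero => omega
  | succ d ih =>
    intro _ u v
    cases Nat.eq_zero_or_pos d with
    | inl h => subst h; rw [Pm_one]; exact transP_pos α β hα hαβ hβ u v
    | inr hd =>
      show (0:ℝ) < ∑ w, Pm α β d u w * transP α β w v
      apply Finset.sum_pos
      · intro w _
        exact mul_pos (ih hd u w) (transP_pos α β hα hαβ hβ w v)
      · exact Finset.univ_nonempty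

lemma dpv_pow {A : ℕ → Option Bool} {s : ℕ} {u0 : Bool} {c : ℝ}
    (h0 : ∀ u, dpv α β A s u = if u = u0 then c else 0) :
    ∀ (d : ℕ), 0 < d → (∀ k, s < k → k < s + d → A k = none) →
      ∀ u, dpv α β A (s+d) u = cind (A (s+d)) u * (c * Pm α β d u0 u) := by
  intro d
  induction d with
  | zero => omega
  | succ d ih =>
    intro _ hfree u
    cases Nat.eq_zero_or_pos d with
    | inl h =>
      subst h
      show dpv α β A (s+1) u = _
      simp only [dpv]
      rw [Fintype.sum_congr _ _ (fun w => by rw [h0 w])]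
      have : (∑ w, (if w = u0 then c else 0) * transP α β w u) = c * transP α β u0 u := by
        rw [Fintype.sum_bool]; cases u0 <;> simp
      rw [this, Pm_one]
    | inr hd =>
      have : s + (d+1) = (s+d) + 1 := by omega
      rw [this]
      show dpv α β A ((s+d)+1) u = _
      have hfr : A (s+d) = none := hfree _ (by omega) (by omega)
      simp only [dpv]
      have : ∀ w, dpv α β A (s+d) w = c * Pm α β d u0 w := by
        intro w
        rw [ih hd (fun k h1 h2 => hfree k h1 (by omega)) w, hfr]
        simp [cind]
      rw [Fintype.sum_congr _ _ (fun w => by rw [this w])]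
      have hnn : s + (d+1) = (s+d)+1 := by omega
      rw [← hnn]
      congr 1
      show ∑ w, c * Pm α β d u0 w * transP α β w u = c * Pm α β (d+1) u0 u
      rw [show (Pm α β (d+1) u0 u) = ∑ w, Pm α β d u0 w * transP α β w u from rfl]
      rw [Finset.mul_sum]
      apply Fintype.sum_congr
      intro w; ring

lemma dpv_split (hab : α + β ≠ 0) {A A' : ℕ → Option Bool} {mm : ℕ} {u0 : Bool}
    (hA : A mm = some u0) (hA'lt : ∀ k < mm, A' k = none) (hA'm : A' mm = some u0)
    (hgt : ∀ k, mm < k → A' k = A k) :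
    ∀ (d : ℕ) (u : Bool),
      statDist α β u0 * dpv α β A (mm+d) u = dpv α β A mm u0 * dpv α β A' (mm+d) u := by
  intro d
  induction d with
  | zero =>
    intro u
    simp only [Nat.add_zero]
    rw [dpv_pinned_at hA u, dpv_pin hab hA'lt hA'm u]
    split_ifs with h
    · ring
    · ring
  | succ d ih =>
    intro u
    have hstep : mm + (d+1) = (mm+d) + 1 := by omega
    rw [hstep]
    show statDist α β u0 * dpv α β A ((mm+d)+1) u = dpv α β A mm u0 * dpv α β A' ((mm+d)+1) u
    simp only [dpv]
    rw [hgt ((mm+d)+1) (by omega)]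
    have hsum : statDist α β u0 * (∑ w, dpv α β A (mm+d) w * transP α β w u)
        = dpv α β A mm u0 * (∑ w, dpv α β A' (mm+d) w * transP α β w u) := by
      rw [Finset.mul_sum, Finset.mul_sum]
      apply Fintype.sum_congr
      intro w
      calc statDist α β u0 * (dpv α β A (mm+d) w * transP α β w u)
          = (statDist α β u0 * dpv α β A (mm+d) w) * transP α β w u := by ring
        _ = (dpv α β A mm u0 * dpv α β A' (mm+d) w) * transP α β w u := by rw [ih w]
        _ = dpv α β A mm u0 * (dpv α β A' (mm+d) w * transP α β w u) := by ring
    calc statDist α β u0 * (cind (A ((mm+d)+1)) u * ∑ w, dpv α β A (mm+d) w * transP α β w u)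
        = cind (A ((mm+d)+1)) u * (statDist α β u0 * ∑ w, dpv α β A (mm+d) w * transP α β w u) := by
          ring
      _ = cind (A ((mm+d)+1)) u * (dpv α β A mm u0 * ∑ w, dpv α β A' (mm+d) w * transP α β w u) := by
          rw [hsum]
      _ = dpv α β A mm u0 * (cind (A ((mm+d)+1)) u * ∑ w, dpv α β A' (mm+d) w * transP α β w u) := by
          ring

lemma Pm_closed (hab : α + β ≠ 0) :
    ∀ (d : ℕ) (u v : Bool), Pm α β d u v
      = statDist α β v + (1-α-β)^d * ((if v = u then 1 else 0) - statDist α β v) := by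
  intro d
  induction d with
  | zero => intro u v; simp [Pm]
  | succ d ih =>
    intro u v
    show (∑ w, Pm α β d u w * transP α β w v) = _
    rw [Fintype.sum_congr _ _ (fun w => by rw [ih u w])]
    rw [Fintype.sum_bool]
    cases u <;> cases v <;>
      simp only [statDist, transP, pow_succ, Bool.true_eq_false, Bool.false_eq_true, if_true, if_false] <;>
      field_simp <;> ring

end Aux3
section Aux4

def cstOf {n : ℕ} (T : Finset (Fin n)) (g : Fin n → Bool) : ℕ → Option Bool :=
  fun j => if h : j < n then (if (⟨j, h⟩ : Fin n) ∈ T then some (g ⟨j, h⟩) else none) else none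

def cstOfP {n : ℕ} (T : Finset (Fin n)) (g : Fin n → Bool) (p : Fin n) (a : Bool) :
    ℕ → Option Bool :=
  fun j => if j = p.1 then some a else cstOf T g j

lemma cstOf_spec {n : ℕ} (T : Finset (Fin n)) (g : Fin n → Bool) (j : Fin n) :
    cstOf T g j.1 = if j ∈ T then some (g j) else none := by
  simp [cstOf, j.2]

lemma cstOf_none' {n : ℕ} (T : Finset (Fin n)) (g : Fin n → Bool) (k : ℕ)
    (h : ∀ (hk : k < n), (⟨k, hk⟩ : Fin n) ∉ T) : cstOf T g k = none := by
  unfold cstOf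
  split
  · rename_i hk; rw [if_neg (h hk)]
  · rfl

lemma mem_cyl_iff {m : ℕ} (T : Finset (Fin (m+1))) (g : Fin (m+1) → Bool)
    (x : Fin (m+1) → Bool) :
    (x ∈ {x : Fin (m+1) → Bool | ∀ t ∈ T, x t = g t})
      ↔ ∀ (j : Fin (m+1)) (b : Bool), cstOf T g j.1 = some b → x j = b := by
  constructor
  · intro h j b hj
    rw [cstOf_spec] at hj
    by_cases hmem : j ∈ T
    · rw [if_pos hmem] at hj
      cases hj
      exact h j hmem
    · rw [if_neg hmem] at hj; cases hj
  · intro h t ht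
    exact h t (g t) (by rw [cstOf_spec, if_pos ht])

lemma mem_cylP_iff {m : ℕ} (T : Finset (Fin (m+1))) (g : Fin (m+1) → Bool)
    (p : Fin (m+1)) (a : Bool) (hp : p ∉ T) (x : Fin (m+1) → Bool) :
    (x ∈ ({x : Fin (m+1) → Bool | ∀ t ∈ T, x t = g t} ∩ {x | x p = a}))
      ↔ ∀ (j : Fin (m+1)) (b : Bool), cstOfP T g p a j.1 = some b → x j = b := by
  constructor
  · rintro ⟨h1, h2⟩ j b hj
    unfold cstOfP at hj
    by_cases hjp : j.1 = p.1
    · rw [if_pos hjp] at hj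
      cases hj
      have : j = p := Fin.ext hjp
      subst this
      exact h2
    · rw [if_neg hjp, cstOf_spec] at hj
      by_cases hmem : j ∈ T
      · rw [if_pos hmem] at hj; cases hj; exact h1 j hmem
      · rw [if_neg hmem] at hj; cases hj
  · intro h
    constructor
    · intro t ht
      have htp : t.1 ≠ p.1 := by
        intro hc
        exact hp (by rwa [← Fin.ext hc])
      exact h t (g t) (by unfold cstOfP; rw [if_neg htp, cstOf_spec, if_pos ht])
    · exact h p a (by unfold cstOfP; rw [if_pos rfl])

lemma prX_nonneg_pt (α β : ℝ) (hα : 0 < α) (hαβ : α ≤ β) (hβ : β < 1)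
    {n : ℕ} (E : Set (Fin n → Bool)) (x : Fin n → Bool) :
    0 ≤ E.indicator (jointX α β) x :=
  Set.indicator_nonneg (fun y _ => (jointX_pos α β hα hαβ hβ y).le) x

lemma prX_pos (α β : ℝ) (hα : 0 < α) (hαβ : α ≤ β) (hβ : β < 1)
    {n : ℕ} (E : Set (Fin n → Bool)) {x0 : Fin n → Bool} (hx0 : x0 ∈ E) :
    0 < prX α β E := by
  rw [prX]
  apply Finset.sum_pos' (fun x _ => prX_nonneg_pt α β hα hαβ hβ E x)
  refine ⟨x0, Finset.mem_univ _, ?_⟩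
  rw [Set.indicator_of_mem hx0]
  exact jointX_pos α β hα hαβ hβ x0

lemma prX_empty (α β : ℝ) {n : ℕ} : prX α β (∅ : Set (Fin n → Bool)) = 0 := by
  simp [prX]

lemma prX_point (α β : ℝ) (hab : α + β ≠ 0) {m : ℕ} (p : Fin (m+1)) (a : Bool) :
    prX α β {x : Fin (m+1) → Bool | x p = a} = statDist α β a := by
  set A : ℕ → Option Bool := fun j => if j = p.1 then some a else none with hA
  have hE : ∀ x : Fin (m+1) → Bool,
      (x ∈ {x : Fin (m+1) → Bool | x p = a})
        ↔ ∀ (j : Fin (m+1)) (b : Bool), A j.1 = some b → x j = b := by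
    intro x
    constructor
    · intro h j b hj
      simp only [hA] at hj
      by_cases hjp : j.1 = p.1
      · rw [if_pos hjp] at hj
        cases hj
        have : j = p := Fin.ext hjp
        subst this; exact h
      · rw [if_neg hjp] at hj; cases hj
    · intro h
      exact h p a (by simp [hA])
  rw [prX_eq_dpv α β A _ hE]
  have hm : p.1 + (m - p.1) = m := by have := p.2; omega
  rw [← hm, dpv_sum_tail p.1 (m - p.1) (fun k h1 h2 => by
    simp only [hA]; rw [if_neg (by omega)])]
  have hpin : ∀ u, dpv α β A p.1 u = if u = a then statDist α β a else 0 :=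
    dpv_pin hab (fun k hk => by simp only [hA]; rw [if_neg (by omega)])
      (by simp [hA])
  rw [Fintype.sum_congr _ _ hpin, Fintype.sum_bool]
  cases a <;> simp

lemma Nl_formula (α β : ℝ) (hab : α + β ≠ 0) {m : ℕ} (p tl : Fin (m+1))
    (Sl : Finset (Fin (m+1))) (g : Fin (m+1) → Bool) (a : Bool)
    (htl : tl ∈ Sl) (hSl : ∀ t ∈ Sl, t ≤ tl) (hlp : tl < p) :
    prX α β ({x : Fin (m+1) → Bool | ∀ t ∈ Sl, x t = g t} ∩ {x | x p = a})
      = dpv α β (cstOf Sl g) tl.1 (g tl) * Pm α β (p.1 - tl.1) (g tl) a := by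
  have hlp' : tl.1 < p.1 := hlp
  have hpSl : p ∉ Sl := fun h => absurd (hSl p h) (not_le.2 hlp)
  set A := cstOfP Sl g p a with hA
  rw [prX_eq_dpv α β A _ (mem_cylP_iff Sl g p a hpSl)]
  have hAeq : ∀ k ≤ tl.1, A k = cstOf Sl g k := by
    intro k hk
    simp only [hA, cstOfP]
    rw [if_neg (by omega)]
  have hAtl : A tl.1 = some (g tl) := by
    rw [hAeq tl.1 (le_refl _), cstOf_spec, if_pos htl]
  have h0 := dpv_pinned_at (α := α) (β := β) hAtl
  have hfree1 : ∀ k, tl.1 < k → k < tl.1 + (p.1 - tl.1) → A k = none := by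
    intro k h1 h2
    simp only [hA, cstOfP]
    rw [if_neg (by omega)]
    apply cstOf_none'
    intro hk hmem
    have := hSl _ hmem
    have : k ≤ tl.1 := this
    omega
  have hdl : 0 < p.1 - tl.1 := by omega
  have hpow := dpv_pow h0 (p.1 - tl.1) hdl hfree1
  have htlp : tl.1 + (p.1 - tl.1) = p.1 := by omega
  rw [htlp] at hpow
  have hAp : A p.1 = some a := by simp [hA, cstOfP]
  have hm : p.1 + (m - p.1) = m := by have := p.2; omega
  have hsum := dpv_sum_tail (α := α) (β := β) (A := A) p.1 (m - p.1) (fun k h1 h2 => by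
    simp only [hA, cstOfP]
    rw [if_neg (by omega)]
    apply cstOf_none'
    intro hk hmem
    have : (⟨k, hk⟩ : Fin (m+1)) ≤ tl := hSl _ hmem
    have : k ≤ tl.1 := this
    omega)
  rw [hm] at hsum
  rw [hsum]
  rw [Fintype.sum_congr _ _ hpow]
  rw [hAp]
  have hc : dpv α β A tl.1 (g tl) = dpv α β (cstOf Sl g) tl.1 (g tl) :=
    dpv_congr tl.1 hAeq (g tl)
  rw [Fintype.sum_bool]
  cases a <;> simp [cind, hc]

lemma Nr_formula (α β : ℝ) (hab : α + β ≠ 0) {m : ℕ} (p tr : Fin (m+1))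
    (Sr : Finset (Fin (m+1))) (g : Fin (m+1) → Bool) (a : Bool)
    (htr : tr ∈ Sr) (hSr : ∀ t ∈ Sr, tr ≤ t) (hpr : p < tr) :
    statDist α β (g tr) *
        prX α β ({x : Fin (m+1) → Bool | ∀ t ∈ Sr, x t = g t} ∩ {x | x p = a})
      = statDist α β a * Pm α β (tr.1 - p.1) a (g tr) *
          prX α β {x : Fin (m+1) → Bool | ∀ t ∈ Sr, x t = g t} := by
  have hpr' : p.1 < tr.1 := hpr
  have hpSr : p ∉ Sr := fun h => absurd (hSr p h) (not_le.2 hpr)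
  set A := cstOfP Sr g p a with hA
  set A' := cstOf Sr g with hA'
  have hSrnone : ∀ k, k < tr.1 → cstOf Sr g k = none := by
    intro k hk
    apply cstOf_none'
    intro hkk hmem
    have : tr ≤ (⟨k, hkk⟩ : Fin (m+1)) := hSr _ hmem
    have : tr.1 ≤ k := this
    omega
  rw [prX_eq_dpv α β A _ (mem_cylP_iff Sr g p a hpSr),
    prX_eq_dpv α β A' _ (mem_cyl_iff Sr g)]
  have hpin : ∀ u, dpv α β A p.1 u = if u = a then statDist α β a else 0 := by
    apply dpv_pin hab
    · intro k hk
      simp only [hA, cstOfP]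
      rw [if_neg (by omega)]
      exact hSrnone k (by omega)
    · simp [hA, cstOfP]
  have hdr : 0 < tr.1 - p.1 := by omega
  have hpow := dpv_pow hpin (tr.1 - p.1) hdr (fun k h1 h2 => by
    simp only [hA, cstOfP]
    rw [if_neg (by omega)]
    exact hSrnone k (by omega))
  have hptr : p.1 + (tr.1 - p.1) = tr.1 := by omega
  rw [hptr] at hpow
  have hAtr : A tr.1 = some (g tr) := by
    simp only [hA, cstOfP]
    rw [if_neg (by omega), cstOf_spec, if_pos htr]
  have hval : dpv α β A tr.1 (g tr) = statDist α β a * Pm α β (tr.1 - p.1) a (g tr) := by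
    rw [hpow (g tr), hAtr]
    simp [cind]
  have hsplit := dpv_split hab (A := A) (A' := A') hAtr
    (fun k hk => hSrnone k hk)
    (by rw [hA', cstOf_spec, if_pos htr])
    (fun k hk => by simp only [hA, cstOfP]; rw [if_neg (by omega)])
  have hm : tr.1 + (m - tr.1) = m := by have := tr.2; omega
  calc statDist α β (g tr) * ∑ u, dpv α β A m u
      = ∑ u, statDist α β (g tr) * dpv α β A (tr.1 + (m - tr.1)) u := by
        rw [hm, Finset.mul_sum]
    _ = ∑ u, dpv α β A tr.1 (g tr) * dpv α β A' (tr.1 + (m - tr.1)) u := by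
        apply Fintype.sum_congr
        intro u
        rw [hsplit (m - tr.1) u]
    _ = statDist α β a * Pm α β (tr.1 - p.1) a (g tr) * ∑ u, dpv α β A' m u := by
        rw [hm, ← Finset.mul_sum, hval]

lemma N_formula (α β : ℝ) (hab : α + β ≠ 0) {m : ℕ} (p tl tr : Fin (m+1))
    (S : Finset (Fin (m+1))) (g : Fin (m+1) → Bool) (a : Bool)
    (htl : tl ∈ S) (htr : tr ∈ S) (hcov : ∀ t ∈ S, t ≤ tl ∨ tr ≤ t)
    (hlp : tl < p) (hpr : p < tr) :
    statDist α β (g tr) *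
        prX α β ({x : Fin (m+1) → Bool | ∀ t ∈ S, x t = g t} ∩ {x | x p = a})
      = dpv α β (cstOf (S.filter (· ≤ tl)) g) tl.1 (g tl) * Pm α β (p.1 - tl.1) (g tl) a *
          (Pm α β (tr.1 - p.1) a (g tr) *
            prX α β {x : Fin (m+1) → Bool | ∀ t ∈ S.filter (tr ≤ ·), x t = g t}) := by
  have hlp' : tl.1 < p.1 := hlp
  have hpr' : p.1 < tr.1 := hpr
  have hltr : tl.1 < tr.1 := by omega
  have hpS : p ∉ S := by
    intro h
    rcases hcov p h with h' | h'
    · exact absurd h' (not_le.2 hlp)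
    · exact absurd h' (not_le.2 hpr)
  set A := cstOfP S g p a with hA
  set A' := cstOf (S.filter (tr ≤ ·)) g with hA'
  rw [prX_eq_dpv α β A _ (mem_cylP_iff S g p a hpS),
    prX_eq_dpv α β A' _ (mem_cyl_iff _ g)]
  -- value at tl
  have hAeq : ∀ k ≤ tl.1, A k = cstOf (S.filter (· ≤ tl)) g k := by
    intro k hk
    simp only [hA, cstOfP]
    rw [if_neg (by omega)]
    by_cases hkk : k < m+1
    · have : cstOf S g k = cstOf (S.filter (· ≤ tl)) g k := by
        unfold cstOf
        rw [dif_pos hkk, dif_pos hkk]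
        by_cases hmem : (⟨k, hkk⟩ : Fin (m+1)) ∈ S
        · rw [if_pos hmem, if_pos (Finset.mem_filter.2 ⟨hmem, by
            show k ≤ tl.1; omega⟩)]
        · rw [if_neg hmem, if_neg (fun hc => hmem (Finset.mem_filter.1 hc).1)]
      exact this
    · unfold cstOf; rw [dif_neg hkk, dif_neg hkk]
  have hAtl : A tl.1 = some (g tl) := by
    rw [hAeq tl.1 (le_refl _), cstOf_spec,
      if_pos (show tl ∈ S.filter (· ≤ tl) from Finset.mem_filter.2 ⟨htl, le_refl _⟩)]
  have h0 := dpv_pinned_at (α := α) (β := β) hAtl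
  -- pow tl -> p
  have hfree1 : ∀ k, tl.1 < k → k < tl.1 + (p.1 - tl.1) → A k = none := by
    intro k h1 h2
    simp only [hA, cstOfP]
    rw [if_neg (by omega)]
    apply cstOf_none'
    intro hk hmem
    rcases hcov _ hmem with h' | h'
    · have : k ≤ tl.1 := h'; omega
    · have : tr.1 ≤ k := h'; omega
  have hpow1 := dpv_pow h0 (p.1 - tl.1) (by omega) hfree1
  rw [show tl.1 + (p.1 - tl.1) = p.1 by omega] at hpow1
  have hAp : A p.1 = some a := by simp [hA, cstOfP]
  have hpinp : ∀ u, dpv α β A p.1 u =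
      if u = a then dpv α β A tl.1 (g tl) * Pm α β (p.1 - tl.1) (g tl) a else 0 := by
    intro u
    rw [hpow1 u, hAp]
    rcases Bool.eq_false_or_eq_true u with h | h <;> rcases Bool.eq_false_or_eq_true a with h' | h' <;>
      subst h <;> subst h' <;> simp [cind]
  -- pow p -> tr
  have hfree2 : ∀ k, p.1 < k → k < p.1 + (tr.1 - p.1) → A k = none := by
    intro k h1 h2
    simp only [hA, cstOfP]
    rw [if_neg (by omega)]
    apply cstOf_none'
    intro hk hmem
    rcases hcov _ hmem with h' | h'
    · have : k ≤ tl.1 := h'; omega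
    · have : tr.1 ≤ k := h'; omega
  have hpow2 := dpv_pow hpinp (tr.1 - p.1) (by omega) hfree2
  rw [show p.1 + (tr.1 - p.1) = tr.1 by omega] at hpow2
  have hAtr : A tr.1 = some (g tr) := by
    simp only [hA, cstOfP]
    rw [if_neg (by omega), cstOf_spec, if_pos htr]
  have hval : dpv α β A tr.1 (g tr)
      = dpv α β A tl.1 (g tl) * Pm α β (p.1 - tl.1) (g tl) a * Pm α β (tr.1 - p.1) a (g tr) := by
    rw [hpow2 (g tr), hAtr]
    simp [cind]
  -- split at tr
  have hsplit := dpv_split hab (A := A) (A' := A') hAtr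
    (fun k hk => by
      rw [hA']
      apply cstOf_none'
      intro hkk hmem
      have : tr ≤ (⟨k, hkk⟩ : Fin (m+1)) := (Finset.mem_filter.1 hmem).2
      have : tr.1 ≤ k := this
      omega)
    (by rw [hA', cstOf_spec,
          if_pos (show tr ∈ S.filter (tr ≤ ·) from Finset.mem_filter.2 ⟨htr, le_refl _⟩)])
    (fun k hk => by
      simp only [hA, cstOfP]
      rw [if_neg (by omega), hA']
      by_cases hkk : k < m+1
      · unfold cstOf
        rw [dif_pos hkk, dif_pos hkk]
        by_cases hmem : (⟨k, hkk⟩ : Fin (m+1)) ∈ S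
        · rcases hcov _ hmem with h' | h'
          · have : k ≤ tl.1 := h'; omega
          · rw [if_pos (Finset.mem_filter.2 ⟨hmem, h'⟩), if_pos hmem]
        · rw [if_neg (fun hc => hmem (Finset.mem_filter.1 hc).1), if_neg hmem]
      · unfold cstOf; rw [dif_neg hkk, dif_neg hkk])
  have hc : dpv α β A tl.1 (g tl) = dpv α β (cstOf (S.filter (· ≤ tl)) g) tl.1 (g tl) :=
    dpv_congr tl.1 hAeq (g tl)
  have hm : tr.1 + (m - tr.1) = m := by have := tr.2; omega
  calc statDist α β (g tr) * ∑ u, dpv α β A m u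
      = ∑ u, statDist α β (g tr) * dpv α β A (tr.1 + (m - tr.1)) u := by
        rw [hm, Finset.mul_sum]
    _ = ∑ u, dpv α β A tr.1 (g tr) * dpv α β A' (tr.1 + (m - tr.1)) u := by
        apply Fintype.sum_congr
        intro u
        rw [hsplit (m - tr.1) u]
    _ = dpv α β A tr.1 (g tr) * ∑ u, dpv α β A' m u := by
        rw [hm, ← Finset.mul_sum]
    _ = _ := by rw [hval, hc]; ring

end Aux4
section Aux5

/-- the two possible single-site likelihood ratios -/
def rhoF (α β s : ℝ) : Bool → ℝ
  | true => (α + s*β) / (α*(1-s))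
  | false => (β*(1-s)) / (β + s*α)

lemma lam_abs (α β : ℝ) (hα : 0 < α) (hαβ : α ≤ β) (hβ : β < 1) : |1-α-β| < 1 := by
  have hb : 0 < β := lt_of_lt_of_le hα hαβ
  have ha1 : α < 1 := lt_of_le_of_lt hαβ hβ
  rw [abs_lt]; constructor <;> nlinarith

lemma s_facts (α β : ℝ) (hα : 0 < α) (hαβ : α ≤ β) (hβ : β < 1) (d : ℕ) (hd : 0 < d) :
    (1-α-β)^d < 1 ∧ 0 < α + (1-α-β)^d * β ∧ 0 < β + (1-α-β)^d * α := by
  have hb : 0 < β := lt_of_lt_of_le hα hαβ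
  have ha1 : α < 1 := lt_of_le_of_lt hαβ hβ
  have habs := lam_abs α β hα hαβ hβ
  have habs' : |(1-α-β)^d| ≤ |1-α-β| := by
    rw [abs_pow]
    calc |1-α-β|^d ≤ |1-α-β|^1 :=
      pow_le_pow_of_le_one (abs_nonneg _) habs.le hd
    _ = |1-α-β| := pow_one _
  have h1 : (1-α-β)^d < 1 := lt_of_le_of_lt (le_abs_self _) (lt_of_le_of_lt habs' habs)
  refine ⟨h1, ?_, ?_⟩
  · rcases le_or_gt 0 (1-α-β) with h | h
    · have : 0 ≤ (1-α-β)^d := pow_nonneg h d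
      nlinarith
    · have hge : 1-α-β ≤ (1-α-β)^d := by
        calc 1-α-β = -(|1-α-β|) := by rw [abs_of_neg h]; ring
          _ ≤ -(|(1-α-β)^d|) := by linarith [habs']
          _ ≤ (1-α-β)^d := neg_abs_le _
      nlinarith
  · rcases le_or_gt 0 (1-α-β) with h | h
    · have : 0 ≤ (1-α-β)^d := pow_nonneg h d
      nlinarith
    · have hge : 1-α-β ≤ (1-α-β)^d := by
        calc 1-α-β = -(|1-α-β|) := by rw [abs_of_neg h]; ring
          _ ≤ -(|(1-α-β)^d|) := by linarith [habs']
          _ ≤ (1-α-β)^d := neg_abs_le _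
      nlinarith

lemma rhoF_true (α β s : ℝ) : rhoF α β s true = (α + s*β)/(α*(1-s)) := rfl
lemma rhoF_false (α β s : ℝ) : rhoF α β s false = (β*(1-s))/(β + s*α) := rfl

lemma rhoF_pos (α β s : ℝ) (hα : 0 < α) (hαβ : α ≤ β) (hs1 : s < 1)
    (h2 : 0 < α + s*β) (h3 : 0 < β + s*α) (b : Bool) : 0 < rhoF α β s b := by
  have hb : 0 < β := lt_of_lt_of_le hα hαβ
  cases b
  · rw [rhoF_false]
    exact div_pos (by nlinarith) h3
  · rw [rhoF_true]
    exact div_pos h2 (by nlinarith)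

lemma rhoF_log_sign (α β s : ℝ) (hα : 0 < α) (hαβ : α ≤ β) (hs1 : s < 1)
    (h2 : 0 < α + s*β) (h3 : 0 < β + s*α) :
    (0 ≤ s → 0 ≤ Real.log (rhoF α β s true)) ∧ (s ≤ 0 → Real.log (rhoF α β s true) ≤ 0) := by
  have hb : 0 < β := lt_of_lt_of_le hα hαβ
  have hden : 0 < α*(1-s) := mul_pos hα (by linarith)
  constructor
  · intro hs
    apply Real.log_nonneg
    rw [rhoF_true, le_div_iff₀ hden]
    nlinarith
  · intro hs
    apply Real.log_nonpos (le_of_lt (rhoF_pos α β s hα hαβ hs1 h2 h3 true))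
    rw [rhoF_true, div_le_one hden]
    nlinarith

lemma rhoF_dom (α β s : ℝ) (hα : 0 < α) (hαβ : α ≤ β) (hs1 : s < 1)
    (h2 : 0 < α + s*β) (h3 : 0 < β + s*α) (b : Bool) :
    |Real.log (rhoF α β s b)| ≤ |Real.log (rhoF α β s true)| := by
  have hb : 0 < β := lt_of_lt_of_le hα hαβ
  have hden : 0 < α*(1-s) := mul_pos hα (by linarith)
  have hfpos : 0 < rhoF α β s false := rhoF_pos α β s hα hαβ hs1 h2 h3 false
  have htpos : 0 < rhoF α β s true := rhoF_pos α β s hα hαβ hs1 h2 h3 true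
  cases b
  · rcases le_or_gt 0 s with hs | hs
    · -- s ≥ 0 : ρ false ≤ 1 ≤ ρ true, and 1/ρfalse ≤ ρtrue
      have h1t : 1 ≤ rhoF α β s true := by
        rw [rhoF_true, le_div_iff₀ hden]; nlinarith
      have hf1 : rhoF α β s false ≤ 1 := by
        rw [rhoF_false, div_le_one h3]; nlinarith
      rw [abs_of_nonpos (Real.log_nonpos hfpos.le hf1),
        abs_of_nonneg (Real.log_nonneg h1t), ← Real.log_inv]
      apply Real.log_le_log (by positivity)
      rw [show (rhoF α β s false)⁻¹ = (β + s*α)/(β*(1-s)) by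
        rw [rhoF_false, inv_div]]
      rw [rhoF_true, div_le_div_iff₀ (by nlinarith) hden]
      have hba : 0 ≤ (β-α)*(β+α) := mul_nonneg (by linarith) (by linarith)
      have key : 0 ≤ s*(1-s)*((β-α)*(β+α)) :=
        mul_nonneg (mul_nonneg hs (by linarith)) hba
      nlinarith [key]
    · -- s < 0 : ρ true ≤ 1 ≤ ρ false, and ρ false ≤ 1/ρtrue
      have ht1 : rhoF α β s true ≤ 1 := by
        rw [rhoF_true, div_le_one hden]; nlinarith
      have h1f : 1 ≤ rhoF α β s false := by
        rw [rhoF_false, le_div_iff₀ h3]; nlinarith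
      rw [abs_of_nonneg (Real.log_nonneg h1f),
        abs_of_nonpos (Real.log_nonpos htpos.le ht1), ← Real.log_inv]
      apply Real.log_le_log hfpos
      rw [show (rhoF α β s true)⁻¹ = (α*(1-s))/(α + s*β) by
        rw [rhoF_true, inv_div]]
      rw [rhoF_false, div_le_div_iff₀ h3 h2]
      have hba : 0 ≤ (β-α)*(β+α) := mul_nonneg (by linarith) (by linarith)
      have key : s*(1-s)*((β-α)*(β+α)) ≤ 0 :=
        mul_nonpos_of_nonpos_of_nonneg
          (mul_nonpos_of_nonpos_of_nonneg hs.le (by linarith)) hba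
      nlinarith [key]
  · exact le_refl _

lemma abs_add_of_mul_nonneg {a b : ℝ} (h : 0 ≤ a * b) : |a + b| = |a| + |b| := by
  rcases le_total 0 a with ha | ha <;> rcases le_total 0 b with hb | hb
  · rw [abs_of_nonneg ha, abs_of_nonneg hb, abs_of_nonneg (by linarith)]
  · have h0 : a * b = 0 := le_antisymm (mul_nonpos_of_nonneg_of_nonpos ha hb) h
    rcases mul_eq_zero.1 h0 with h' | h' <;> subst h' <;> simp
  · have h0 : a * b = 0 := le_antisymm (mul_nonpos_of_nonpos_of_nonneg ha hb) h
    rcases mul_eq_zero.1 h0 with h' | h' <;> subst h' <;> simp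
  · rw [abs_of_nonpos ha, abs_of_nonpos hb, abs_of_nonpos (by linarith)]; ring

lemma logRatio_pos_pos {a b : ℝ} (ha : 0 < a) (hb : 0 < b) :
    logRatio a b = ((Real.log (a/b) : ℝ) : EReal) := by
  rw [logRatio, if_neg (not_le.2 ha), if_neg (not_le.2 hb)]

lemma max_logRatio {a b : ℝ} (ha : 0 < a) (hb : 0 < b) :
    max (logRatio a b) (logRatio b a) = ((|Real.log (a/b)| : ℝ) : EReal) := by
  rw [logRatio_pos_pos ha hb, logRatio_pos_pos hb ha]
  have : Real.log (b/a) = - Real.log (a/b) := by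
    rw [Real.log_div hb.ne' ha.ne', Real.log_div ha.ne' hb.ne']; ring
  rw [this]
  have hmono : Monotone (fun r : ℝ => (r : EReal)) := fun x y h => EReal.coe_le_coe_iff.2 h
  rw [show ((|Real.log (a/b)| : ℝ) : EReal)
      = ((max (Real.log (a/b)) (-Real.log (a/b)) : ℝ) : EReal) by rw [← abs_eq_max_neg]]
  exact (hmono.map_max).symm

end Aux5
section Aux6

lemma pos_of_mul_pos_right' {a b : ℝ} (h : 0 < a * b) (hb : 0 < b) : 0 < a := by
  nlinarith

lemma Pm_tt (α β : ℝ) (hab : α + β ≠ 0) (d : ℕ) :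
    Pm α β d true true = (α + (1-α-β)^d * β)/(α+β) := by
  rw [Pm_closed hab]; norm_num [statDist]; field_simp; try ring

lemma Pm_tf (α β : ℝ) (hab : α + β ≠ 0) (d : ℕ) :
    Pm α β d true false = β*(1-(1-α-β)^d)/(α+β) := by
  rw [Pm_closed hab]; norm_num [statDist]; field_simp; try ring

lemma Pm_ft (α β : ℝ) (hab : α + β ≠ 0) (d : ℕ) :
    Pm α β d false true = α*(1-(1-α-β)^d)/(α+β) := by
  rw [Pm_closed hab]; norm_num [statDist]; field_simp; try ring

lemma Pm_ff (α β : ℝ) (hab : α + β ≠ 0) (d : ℕ) :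
    Pm α β d false false = (β + (1-α-β)^d*α)/(α+β) := by
  rw [Pm_closed hab]; norm_num [statDist]; field_simp; try ring

lemma Pm_ratio_r (α β : ℝ) (hα : 0 < α) (hαβ : α ≤ β) (hβ : β < 1)
    (d : ℕ) (hd : 0 < d) (c : Bool) :
    Pm α β d true c / Pm α β d false c = rhoF α β ((1-α-β)^d) c := by
  have hb : 0 < β := lt_of_lt_of_le hα hαβ
  have hab0 : 0 < α + β := by positivity
  have hab : α + β ≠ 0 := hab0.ne'
  obtain ⟨hs1, h2, h3⟩ := s_facts α β hα hαβ hβ d hd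
  have n1 : α + β ≠ 0 := hab
  have n2 : β + (1-α-β)^d * α ≠ 0 := h3.ne'
  have n3 : α + (1-α-β)^d * β ≠ 0 := h2.ne'
  have n4 : (1:ℝ) - (1-α-β)^d ≠ 0 := by linarith
  have n5 : α ≠ 0 := hα.ne'
  have n6 : β ≠ 0 := hb.ne'
  cases c
  · rw [Pm_tf α β hab, Pm_ff α β hab, rhoF_false]
    field_simp
    try ring
  · rw [Pm_tt α β hab, Pm_ft α β hab, rhoF_true]
    field_simp
    try ring

lemma Pm_ratio_l (α β : ℝ) (hα : 0 < α) (hαβ : α ≤ β) (hβ : β < 1)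
    (d : ℕ) (hd : 0 < d) (b : Bool) :
    statDist α β false * Pm α β d b true / (statDist α β true * Pm α β d b false)
      = rhoF α β ((1-α-β)^d) b := by
  have hb : 0 < β := lt_of_lt_of_le hα hαβ
  have hab0 : 0 < α + β := by positivity
  have hab : α + β ≠ 0 := hab0.ne'
  obtain ⟨hs1, h2, h3⟩ := s_facts α β hα hαβ hβ d hd
  have hsd : statDist α β false = β/(α+β) := rfl
  have hst : statDist α β true = α/(α+β) := rfl
  have n1 : α + β ≠ 0 := hab
  have n2 : β + (1-α-β)^d * α ≠ 0 := h3.ne'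
  have n3 : α + (1-α-β)^d * β ≠ 0 := h2.ne'
  have n4 : (1:ℝ) - (1-α-β)^d ≠ 0 := by linarith
  have n5 : α ≠ 0 := hα.ne'
  have n6 : β ≠ 0 := hb.ne'
  cases b
  · rw [Pm_ft α β hab, Pm_ff α β hab, rhoF_false, hsd, hst]
    field_simp
    try ring
  · rw [Pm_tt α β hab, Pm_tf α β hab, rhoF_true, hsd, hst]
    field_simp
    try ring

lemma cyl_mem_self {m : ℕ} (T : Finset (Fin (m+1))) (g : Fin (m+1) → Bool) :
    g ∈ {x : Fin (m+1) → Bool | ∀ t ∈ T, x t = g t} := fun _ _ => rfl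

lemma cylP_mem {m : ℕ} (T : Finset (Fin (m+1))) (g : Fin (m+1) → Bool)
    (p : Fin (m+1)) (a : Bool) (hp : p ∉ T) :
    Function.update g p a ∈
      ({x : Fin (m+1) → Bool | ∀ t ∈ T, x t = g t} ∩ {x | x p = a}) := by
  constructor
  · intro t ht
    have htp : t ≠ p := fun h => hp (h ▸ ht)
    exact Function.update_of_ne htp a g
  · exact Function.update_self p a g

/-- ratio cancellation helper -/
lemma ratio_helper {N1 N0 pi1 pi0 pig cA P1 P0 Q1 Q0 NR : ℝ}
    (h1 : pig * N1 = cA * P1 * (Q1 * NR)) (h0 : pig * N0 = cA * P0 * (Q0 * NR))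
    (hpi1 : 0 < pi1) (hpi0 : 0 < pi0) (hpig : 0 < pig) (hN0 : 0 < N0)
    (hP0 : 0 < P0) (hQ0 : 0 < Q0) (hcA : 0 < cA) (hNR : 0 < NR) :
    (N1/pi1)/(N0/pi0) = (pi0*P1/(pi1*P0)) * (Q1/Q0) := by
  have e1 : N1 = cA * P1 * (Q1 * NR)/pig := by
    rw [eq_div_iff hpig.ne']; linarith [h1]
  have e0 : N0 = cA * P0 * (Q0 * NR)/pig := by
    rw [eq_div_iff hpig.ne']; linarith [h0]
  rw [e1, e0]
  field_simp

end Aux6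
section Aux7

lemma pwInfl_eq_abs (α β : ℝ) {n : ℕ} (p : Fin n) (T : Finset (Fin n)) (g : Fin n → Bool)
    (h1 : 0 < condProb α β {x | ∀ t ∈ T, x t = g t} {x | x p = true})
    (h0 : 0 < condProb α β {x | ∀ t ∈ T, x t = g t} {x | x p = false}) :
    pwInfl α β p T g = ((|Real.log (condProb α β {x | ∀ t ∈ T, x t = g t} {x | x p = true}
      / condProb α β {x | ∀ t ∈ T, x t = g t} {x | x p = false})| : ℝ) : EReal) := by
  unfold pwInfl
  exact max_logRatio h1 h0

lemma pwInfl_nonneg (α β : ℝ) {n : ℕ} (p : Fin n) (T : Finset (Fin n)) (g : Fin n → Bool)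
    (h1 : 0 < condProb α β {x | ∀ t ∈ T, x t = g t} {x | x p = true})
    (h0 : 0 < condProb α β {x | ∀ t ∈ T, x t = g t} {x | x p = false}) :
    (0 : EReal) ≤ pwInfl α β p T g := by
  rw [pwInfl_eq_abs α β p T g h1 h0]
  exact_mod_cast abs_nonneg _

lemma pwInfl_top (α β : ℝ) {n : ℕ} (p : Fin n) (T : Finset (Fin n)) (g : Fin n → Bool)
    (h1 : 0 < condProb α β {x | ∀ t ∈ T, x t = g t} {x | x p = true})
    (h0 : condProb α β {x | ∀ t ∈ T, x t = g t} {x | x p = false} = 0) :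
    pwInfl α β p T g = ⊤ := by
  have htop : logRatio (condProb α β {x | ∀ t ∈ T, x t = g t} {x | x p = true})
      (condProb α β {x | ∀ t ∈ T, x t = g t} {x | x p = false}) = ⊤ := by
    rw [logRatio, if_neg (not_le.2 h1), h0, if_pos (le_refl (0:ℝ))]
  exact le_antisymm le_top (htop ▸ le_max_left _ _)

lemma pw_Sl_formula (α β : ℝ) (hα : 0 < α) (hαβ : α ≤ β) (hβ : β < 1) {m : ℕ}
    (p tl : Fin (m+1)) (Sl : Finset (Fin (m+1))) (g : Fin (m+1) → Bool)
    (htl : tl ∈ Sl) (hSl : ∀ t ∈ Sl, t ≤ tl) (hlp : tl < p) :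
    pwInfl α β p Sl g
      = ((|Real.log (rhoF α β ((1-α-β)^(p.1-tl.1)) (g tl))| : ℝ) : EReal) := by
  have hb : 0 < β := lt_of_lt_of_le hα hαβ
  have hab0 : 0 < α+β := by positivity
  have hab : α+β ≠ 0 := hab0.ne'
  have hpSl : p ∉ Sl := fun h => absurd (hSl p h) (not_le.2 hlp)
  have hlt : tl.1 < p.1 := hlp
  have hdl : 0 < p.1 - tl.1 := by omega
  have hμ : ∀ a, prX α β {x : Fin (m+1) → Bool | x p = a} = statDist α β a :=
    prX_point α β hab p
  have hN : ∀ a, prX α β ({x : Fin (m+1) → Bool | ∀ t ∈ Sl, x t = g t} ∩ {x | x p = a})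
      = dpv α β (cstOf Sl g) tl.1 (g tl) * Pm α β (p.1-tl.1) (g tl) a :=
    fun a => Nl_formula α β hab p tl Sl g a htl hSl hlp
  set cA := dpv α β (cstOf Sl g) tl.1 (g tl) with hcA
  have hPm : ∀ u v, 0 < Pm α β (p.1-tl.1) u v := Pm_pos hα hαβ hβ _ hdl
  have hNpos : ∀ a, 0 < prX α β
      ({x : Fin (m+1) → Bool | ∀ t ∈ Sl, x t = g t} ∩ {x | x p = a}) :=
    fun a => prX_pos α β hα hαβ hβ _ (cylP_mem Sl g p a hpSl)
  have hcApos : 0 < cA :=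
    pos_of_mul_pos_right' (by rw [← hN true]; exact hNpos true) (hPm (g tl) true)
  have hc : ∀ a, condProb α β {x : Fin (m+1) → Bool | ∀ t ∈ Sl, x t = g t} {x | x p = a}
      = (cA * Pm α β (p.1-tl.1) (g tl) a) / statDist α β a := by
    intro a
    rw [condProb, hN a, hμ a]
  have hcpos : ∀ a, 0 < condProb α β
      {x : Fin (m+1) → Bool | ∀ t ∈ Sl, x t = g t} {x | x p = a} := by
    intro a
    rw [hc a]
    exact div_pos (mul_pos hcApos (hPm _ _)) (statDist_pos α β hα hαβ hβ a)
  rw [pwInfl_eq_abs α β p Sl g (hcpos true) (hcpos false)]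
  have hr : condProb α β {x : Fin (m+1) → Bool | ∀ t ∈ Sl, x t = g t} {x | x p = true}
      / condProb α β {x : Fin (m+1) → Bool | ∀ t ∈ Sl, x t = g t} {x | x p = false}
      = rhoF α β ((1-α-β)^(p.1-tl.1)) (g tl) := by
    rw [hc true, hc false, ← Pm_ratio_l α β hα hαβ hβ (p.1-tl.1) hdl (g tl)]
    have n1 : statDist α β true ≠ 0 := (statDist_pos α β hα hαβ hβ true).ne'
    have n2 : statDist α β false ≠ 0 := (statDist_pos α β hα hαβ hβ false).ne'
    have n3 : Pm α β (p.1-tl.1) (g tl) false ≠ 0 := (hPm _ _).ne'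
    have n4 : cA ≠ 0 := hcApos.ne'
    field_simp
  rw [hr]

lemma pw_Sr_formula (α β : ℝ) (hα : 0 < α) (hαβ : α ≤ β) (hβ : β < 1) {m : ℕ}
    (p tr : Fin (m+1)) (Sr : Finset (Fin (m+1))) (g : Fin (m+1) → Bool)
    (htr : tr ∈ Sr) (hSr : ∀ t ∈ Sr, tr ≤ t) (hpr : p < tr) :
    pwInfl α β p Sr g
      = ((|Real.log (rhoF α β ((1-α-β)^(tr.1-p.1)) (g tr))| : ℝ) : EReal) := by
  have hb : 0 < β := lt_of_lt_of_le hα hαβ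
  have hab0 : 0 < α+β := by positivity
  have hab : α+β ≠ 0 := hab0.ne'
  have hpSr : p ∉ Sr := fun h => absurd (hSr p h) (not_le.2 hpr)
  have hlt : p.1 < tr.1 := hpr
  have hdr : 0 < tr.1 - p.1 := by omega
  have hμ : ∀ a, prX α β {x : Fin (m+1) → Bool | x p = a} = statDist α β a :=
    prX_point α β hab p
  set NR := prX α β {x : Fin (m+1) → Bool | ∀ t ∈ Sr, x t = g t} with hNR
  set πg := statDist α β (g tr) with hπg
  have hN : ∀ a, πg * prX α β
      ({x : Fin (m+1) → Bool | ∀ t ∈ Sr, x t = g t} ∩ {x | x p = a})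
      = statDist α β a * Pm α β (tr.1-p.1) a (g tr) * NR :=
    fun a => Nr_formula α β hab p tr Sr g a htr hSr hpr
  have hPm : ∀ u v, 0 < Pm α β (tr.1-p.1) u v := Pm_pos hα hαβ hβ _ hdr
  have hπgpos : 0 < πg := statDist_pos α β hα hαβ hβ (g tr)
  have hNRpos : 0 < NR := prX_pos α β hα hαβ hβ _ (cyl_mem_self Sr g)
  have hc : ∀ a, condProb α β {x : Fin (m+1) → Bool | ∀ t ∈ Sr, x t = g t} {x | x p = a}
      = Pm α β (tr.1-p.1) a (g tr) * NR / πg := by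
    intro a
    rw [condProb, hμ a]
    have e : prX α β ({x : Fin (m+1) → Bool | ∀ t ∈ Sr, x t = g t} ∩ {x | x p = a})
        = statDist α β a * Pm α β (tr.1-p.1) a (g tr) * NR / πg := by
      rw [eq_div_iff hπgpos.ne']
      linarith [hN a]
    rw [e]
    have n1 : statDist α β a ≠ 0 := (statDist_pos α β hα hαβ hβ a).ne'
    field_simp
  have hcpos : ∀ a, 0 < condProb α β
      {x : Fin (m+1) → Bool | ∀ t ∈ Sr, x t = g t} {x | x p = a} := by
    intro a
    rw [hc a]
    exact div_pos (mul_pos (hPm _ _) hNRpos) hπgpos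
  rw [pwInfl_eq_abs α β p Sr g (hcpos true) (hcpos false)]
  have hr : condProb α β {x : Fin (m+1) → Bool | ∀ t ∈ Sr, x t = g t} {x | x p = true}
      / condProb α β {x : Fin (m+1) → Bool | ∀ t ∈ Sr, x t = g t} {x | x p = false}
      = rhoF α β ((1-α-β)^(tr.1-p.1)) (g tr) := by
    rw [hc true, hc false, ← Pm_ratio_r α β hα hαβ hβ (tr.1-p.1) hdr (g tr)]
    have n3 : Pm α β (tr.1-p.1) false (g tr) ≠ 0 := (hPm _ _).ne'
    field_simp
  rw [hr]

lemma rhoF_pos' (α β : ℝ) (hα : 0 < α) (hαβ : α ≤ β) (hβ : β < 1) {d : ℕ} (hd : 0 < d)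
    (b : Bool) : 0 < rhoF α β ((1-α-β)^d) b := by
  obtain ⟨hs1, h2, h3⟩ := s_facts α β hα hαβ hβ d hd
  exact rhoF_pos α β _ hα hαβ hs1 h2 h3 b

lemma pw_S_formula (α β : ℝ) (hα : 0 < α) (hαβ : α ≤ β) (hβ : β < 1) {m : ℕ}
    (p tl tr : Fin (m+1)) (S : Finset (Fin (m+1))) (g : Fin (m+1) → Bool)
    (htl : tl ∈ S) (htr : tr ∈ S) (hcov : ∀ t ∈ S, t ≤ tl ∨ tr ≤ t)
    (hlp : tl < p) (hpr : p < tr) :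
    pwInfl α β p S g
      = ((|Real.log (rhoF α β ((1-α-β)^(p.1-tl.1)) (g tl))
          + Real.log (rhoF α β ((1-α-β)^(tr.1-p.1)) (g tr))| : ℝ) : EReal) := by
  have hb : 0 < β := lt_of_lt_of_le hα hαβ
  have hab0 : 0 < α+β := by positivity
  have hab : α+β ≠ 0 := hab0.ne'
  have hlt1 : tl.1 < p.1 := hlp
  have hlt2 : p.1 < tr.1 := hpr
  have hdl : 0 < p.1 - tl.1 := by omega
  have hdr : 0 < tr.1 - p.1 := by omega
  have hpS : p ∉ S := by
    intro h
    rcases hcov p h with h' | h'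
    · exact absurd h' (not_le.2 hlp)
    · exact absurd h' (not_le.2 hpr)
  have hμ : ∀ a, prX α β {x : Fin (m+1) → Bool | x p = a} = statDist α β a :=
    prX_point α β hab p
  set NR := prX α β {x : Fin (m+1) → Bool | ∀ t ∈ S.filter (tr ≤ ·), x t = g t} with hNR
  set cA := dpv α β (cstOf (S.filter (· ≤ tl)) g) tl.1 (g tl) with hcA
  have hN : ∀ a, statDist α β (g tr) * prX α β
      ({x : Fin (m+1) → Bool | ∀ t ∈ S, x t = g t} ∩ {x | x p = a})
      = cA * Pm α β (p.1-tl.1) (g tl) a * (Pm α β (tr.1-p.1) a (g tr) * NR) :=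
    fun a => N_formula α β hab p tl tr S g a htl htr hcov hlp hpr
  have hPml : ∀ u v, 0 < Pm α β (p.1-tl.1) u v := Pm_pos hα hαβ hβ _ hdl
  have hPmr : ∀ u v, 0 < Pm α β (tr.1-p.1) u v := Pm_pos hα hαβ hβ _ hdr
  have hπgpos : 0 < statDist α β (g tr) := statDist_pos α β hα hαβ hβ (g tr)
  have hNRpos : 0 < NR := prX_pos α β hα hαβ hβ _ (cyl_mem_self _ g)
  have hNpos : ∀ a, 0 < prX α β
      ({x : Fin (m+1) → Bool | ∀ t ∈ S, x t = g t} ∩ {x | x p = a}) :=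
    fun a => prX_pos α β hα hαβ hβ _ (cylP_mem S g p a hpS)
  have hcApos : 0 < cA := by
    have h' : 0 < cA * Pm α β (p.1-tl.1) (g tl) true * (Pm α β (tr.1-p.1) true (g tr) * NR) := by
      rw [← hN true]
      exact mul_pos hπgpos (hNpos true)
    exact pos_of_mul_pos_right'
      (pos_of_mul_pos_right' h' (mul_pos (hPmr _ _) hNRpos)) (hPml _ _)
  have hcpos : ∀ a, 0 < condProb α β
      {x : Fin (m+1) → Bool | ∀ t ∈ S, x t = g t} {x | x p = a} := by
    intro a
    rw [condProb, hμ a]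
    exact div_pos (hNpos a) (statDist_pos α β hα hαβ hβ a)
  rw [pwInfl_eq_abs α β p S g (hcpos true) (hcpos false)]
  have hr : condProb α β {x : Fin (m+1) → Bool | ∀ t ∈ S, x t = g t} {x | x p = true}
      / condProb α β {x : Fin (m+1) → Bool | ∀ t ∈ S, x t = g t} {x | x p = false}
      = rhoF α β ((1-α-β)^(p.1-tl.1)) (g tl) * rhoF α β ((1-α-β)^(tr.1-p.1)) (g tr) := by
    rw [condProb, condProb, hμ true, hμ false]
    rw [ratio_helper (hN true) (hN false) (statDist_pos α β hα hαβ hβ true)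
      (statDist_pos α β hα hαβ hβ false) hπgpos (hNpos false) (hPml _ _) (hPmr _ _)
      hcApos hNRpos]
    rw [Pm_ratio_l α β hα hαβ hβ (p.1-tl.1) hdl (g tl),
      Pm_ratio_r α β hα hαβ hβ (tr.1-p.1) hdr (g tr)]
  rw [hr]
  rw [Real.log_mul (rhoF_pos' α β hα hαβ hβ hdl (g tl)).ne'
    (rhoF_pos' α β hα hαβ hβ hdr (g tr)).ne']

end Aux7
/-- Sub-additivity (and additivity in the even case) of the max-influence
for a partition `S = S^{(ℓ)} ∪ S^{(r)}` with `S^{(ℓ)} = S ∩ [1, t_ℓ]`, `S^{(r)} = S ∩ [t_r, n]`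
and `t_ℓ ≤ p ≤ t_r`. -/
theorem statement6 {n : ℕ} (hn : 1 ≤ n) (p : Fin n) (α β : ℝ)
    (hα : 0 < α) (hαβ : α ≤ β) (hβ : β < 1)
    (S : Finset (Fin n)) (tl tr : Fin n) (htl : tl ∈ S) (htr : tr ∈ S)
    (h1 : tl ≤ p) (h2 : p ≤ tr)
    (hdisj : Disjoint (S.filter (· ≤ tl)) (S.filter (tr ≤ ·)))
    (hcover : S.filter (· ≤ tl) ∪ S.filter (tr ≤ ·) = S) :
    maxInfl α β p S ≤ maxInfl α β p (S.filter (· ≤ tl)) + maxInfl α β p (S.filter (tr ≤ ·)) ∧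
    (Even (tr.1 - tl.1) →
      maxInfl α β p S
        = maxInfl α β p (S.filter (· ≤ tl)) + maxInfl α β p (S.filter (tr ≤ ·))) := by
  obtain ⟨m, rfl⟩ : ∃ m, n = m + 1 := ⟨n - 1, by omega⟩
  have hb : 0 < β := lt_of_lt_of_le hα hαβ
  have hab0 : 0 < α + β := by positivity
  have hab : α + β ≠ 0 := hab0.ne'
  have htlSl : tl ∈ S.filter (· ≤ tl) := Finset.mem_filter.2 ⟨htl, le_refl _⟩
  have htrSr : tr ∈ S.filter (tr ≤ ·) := Finset.mem_filter.2 ⟨htr, le_refl _⟩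
  have hSlle : ∀ t ∈ S.filter (· ≤ tl), t ≤ tl := fun t ht => (Finset.mem_filter.1 ht).2
  have hSrge : ∀ t ∈ S.filter (tr ≤ ·), tr ≤ t := fun t ht => (Finset.mem_filter.1 ht).2
  have hltr : tl < tr := by
    by_contra hc
    push_neg at hc
    exact Finset.disjoint_left.1 hdisj htlSl (Finset.mem_filter.2 ⟨htl, hc⟩)
  have hcov : ∀ t ∈ S, t ≤ tl ∨ tr ≤ t := by
    intro t ht
    rw [← hcover] at ht
    rcases Finset.mem_union.1 ht with h | h
    · exact Or.inl (Finset.mem_filter.1 h).2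
    · exact Or.inr (Finset.mem_filter.1 h).2
  have hC : ∀ a, 0 < prX α β {x : Fin (m+1) → Bool | x p = a} := by
    intro a
    exact prX_pos α β hα hαβ hβ _ (show (fun _ => a) ∈ {x : Fin (m+1) → Bool | x p = a} from rfl)
  rcases eq_or_lt_of_le h1 with heql | hlp
  · -- degenerate case p = tl
    have hpS : p ∈ S := heql ▸ htl
    have hpSl : p ∈ S.filter (· ≤ tl) := heql ▸ htlSl
    have hpSr : p ∉ S.filter (tr ≤ ·) := by
      intro hc
      have := hSrge p hc
      have : tr ≤ tl := heql ▸ this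
      exact absurd hltr (not_lt.2 this)
    have htop : ∀ T : Finset (Fin (m+1)), p ∈ T → maxInfl α β p T = ⊤ := by
      intro T hpT
      have h1c : 0 < condProb α β {x : Fin (m+1) → Bool | ∀ t ∈ T, x t = (fun _ => true) t}
          {x | x p = true} := by
        apply div_pos _ (hC true)
        exact prX_pos α β hα hαβ hβ _ (show (fun _ => true) ∈ _ ∩ _ from ⟨fun t _ => rfl, rfl⟩)
      have h0c : condProb α β {x : Fin (m+1) → Bool | ∀ t ∈ T, x t = (fun _ => true) t}
          {x | x p = false} = 0 := by
        have hemp : ({x : Fin (m+1) → Bool | ∀ t ∈ T, x t = (fun _ => true) t}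
            ∩ {x | x p = false}) = ∅ := by
          apply Set.eq_empty_iff_forall_notMem.2
          rintro x ⟨hx1, hx2⟩
          have hxp : x p = true := hx1 p hpT
          have hxf : x p = false := hx2
          rw [hxp] at hxf
          exact absurd hxf (by decide)
        rw [condProb, hemp, prX_empty, zero_div]
      refine le_antisymm le_top ?_
      calc (⊤ : EReal) = pwInfl α β p T (fun _ => true) :=
            (pwInfl_top α β p T (fun _ => true) h1c h0c).symm
        _ ≤ maxInfl α β p T := le_iSup (fun g => pwInfl α β p T g) _
    have hMr0 : (0:EReal) ≤ maxInfl α β p (S.filter (tr ≤ ·)) := by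
      have hcr : ∀ a, 0 < condProb α β
          {x : Fin (m+1) → Bool | ∀ t ∈ S.filter (tr ≤ ·), x t = (fun _ => true) t}
          {x | x p = a} := by
        intro a
        exact div_pos (prX_pos α β hα hαβ hβ _ (cylP_mem _ (fun _ => true) p a hpSr)) (hC a)
      calc (0:EReal) ≤ pwInfl α β p (S.filter (tr ≤ ·)) (fun _ => true) :=
            pwInfl_nonneg α β p _ (fun _ => true) (hcr true) (hcr false)
        _ ≤ maxInfl α β p (S.filter (tr ≤ ·)) := le_iSup (fun g => pwInfl α β p _ g) _
    have hRHS : maxInfl α β p (S.filter (· ≤ tl)) + maxInfl α β p (S.filter (tr ≤ ·)) = ⊤ := by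
      rw [htop _ hpSl]
      exact EReal.top_add_of_ne_bot (lt_of_lt_of_le EReal.bot_lt_zero hMr0).ne'
    rw [htop S hpS, hRHS]
    exact ⟨le_refl _, fun _ => rfl⟩
  rcases eq_or_lt_of_le h2 with heqr | hpr
  · -- degenerate case p = tr
    have hpS : p ∈ S := heqr ▸ htr
    have hpSr : p ∈ S.filter (tr ≤ ·) := heqr ▸ htrSr
    have hpSl : p ∉ S.filter (· ≤ tl) := by
      intro hc
      have hle := hSlle p hc
      have : tr ≤ tl := heqr ▸ hle
      exact absurd hltr (not_lt.2 this)
    have htop : ∀ T : Finset (Fin (m+1)), p ∈ T → maxInfl α β p T = ⊤ := by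
      intro T hpT
      have h1c : 0 < condProb α β {x : Fin (m+1) → Bool | ∀ t ∈ T, x t = (fun _ => true) t}
          {x | x p = true} := by
        apply div_pos _ (hC true)
        exact prX_pos α β hα hαβ hβ _ (show (fun _ => true) ∈ _ ∩ _ from ⟨fun t _ => rfl, rfl⟩)
      have h0c : condProb α β {x : Fin (m+1) → Bool | ∀ t ∈ T, x t = (fun _ => true) t}
          {x | x p = false} = 0 := by
        have hemp : ({x : Fin (m+1) → Bool | ∀ t ∈ T, x t = (fun _ => true) t}
            ∩ {x | x p = false}) = ∅ := by
          apply Set.eq_empty_iff_forall_notMem.2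
          rintro x ⟨hx1, hx2⟩
          have hxp : x p = true := hx1 p hpT
          have hxf : x p = false := hx2
          rw [hxp] at hxf
          exact absurd hxf (by decide)
        rw [condProb, hemp, prX_empty, zero_div]
      refine le_antisymm le_top ?_
      calc (⊤ : EReal) = pwInfl α β p T (fun _ => true) :=
            (pwInfl_top α β p T (fun _ => true) h1c h0c).symm
        _ ≤ maxInfl α β p T := le_iSup (fun g => pwInfl α β p T g) _
    have hMl0 : (0:EReal) ≤ maxInfl α β p (S.filter (· ≤ tl)) := by
      have hcl : ∀ a, 0 < condProb α β
          {x : Fin (m+1) → Bool | ∀ t ∈ S.filter (· ≤ tl), x t = (fun _ => true) t}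
          {x | x p = a} := by
        intro a
        exact div_pos (prX_pos α β hα hαβ hβ _ (cylP_mem _ (fun _ => true) p a hpSl)) (hC a)
      calc (0:EReal) ≤ pwInfl α β p (S.filter (· ≤ tl)) (fun _ => true) :=
            pwInfl_nonneg α β p _ (fun _ => true) (hcl true) (hcl false)
        _ ≤ maxInfl α β p (S.filter (· ≤ tl)) := le_iSup (fun g => pwInfl α β p _ g) _
    have hRHS : maxInfl α β p (S.filter (· ≤ tl)) + maxInfl α β p (S.filter (tr ≤ ·)) = ⊤ := by
      rw [htop _ hpSr]
      exact EReal.add_top_of_ne_bot (lt_of_lt_of_le EReal.bot_lt_zero hMl0).ne'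
    rw [htop S hpS, hRHS]
    exact ⟨le_refl _, fun _ => rfl⟩
  · -- main case tl < p < tr
    have hlt1 : tl.1 < p.1 := hlp
    have hlt2 : p.1 < tr.1 := hpr
    have hdl : 0 < p.1 - tl.1 := by omega
    have hdr : 0 < tr.1 - p.1 := by omega
    obtain ⟨hsl1, hsl2, hsl3⟩ := s_facts α β hα hαβ hβ (p.1 - tl.1) hdl
    obtain ⟨hsr1, hsr2, hsr3⟩ := s_facts α β hα hαβ hβ (tr.1 - p.1) hdr
    set sl := (1-α-β)^(p.1-tl.1) with hsl
    set sr := (1-α-β)^(tr.1-p.1) with hsr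
    have hpwS : ∀ g, pwInfl α β p S g
        = ((|Real.log (rhoF α β sl (g tl)) + Real.log (rhoF α β sr (g tr))| : ℝ) : EReal) :=
      fun g => pw_S_formula α β hα hαβ hβ p tl tr S g htl htr hcov hlp hpr
    have hpwSl : ∀ g, pwInfl α β p (S.filter (· ≤ tl)) g
        = ((|Real.log (rhoF α β sl (g tl))| : ℝ) : EReal) :=
      fun g => pw_Sl_formula α β hα hαβ hβ p tl _ g htlSl hSlle hlp
    have hpwSr : ∀ g, pwInfl α β p (S.filter (tr ≤ ·)) g
        = ((|Real.log (rhoF α β sr (g tr))| : ℝ) : EReal) :=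
      fun g => pw_Sr_formula α β hα hαβ hβ p tr _ g htrSr hSrge hpr
    have hle : maxInfl α β p S
        ≤ maxInfl α β p (S.filter (· ≤ tl)) + maxInfl α β p (S.filter (tr ≤ ·)) := by
      apply iSup_le
      intro g
      rw [hpwS g]
      calc ((|Real.log (rhoF α β sl (g tl)) + Real.log (rhoF α β sr (g tr))| : ℝ) : EReal)
          ≤ ((|Real.log (rhoF α β sl (g tl))| + |Real.log (rhoF α β sr (g tr))| : ℝ) : EReal) :=
            EReal.coe_le_coe_iff.2 (abs_add_le _ _)
        _ = ((|Real.log (rhoF α β sl (g tl))| : ℝ) : EReal)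
            + ((|Real.log (rhoF α β sr (g tr))| : ℝ) : EReal) := EReal.coe_add _ _
        _ ≤ maxInfl α β p (S.filter (· ≤ tl)) + maxInfl α β p (S.filter (tr ≤ ·)) := by
            apply add_le_add
            · rw [← hpwSl g]
              exact le_iSup (fun g => pwInfl α β p (S.filter (· ≤ tl)) g) g
            · rw [← hpwSr g]
              exact le_iSup (fun g => pwInfl α β p (S.filter (tr ≤ ·)) g) g
    refine ⟨hle, ?_⟩
    intro heven
    -- alignment
    have hss : 0 ≤ sl * sr := by
      rw [hsl, hsr, ← pow_add]
      have harith : p.1 - tl.1 + (tr.1 - p.1) = tr.1 - tl.1 := by omega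
      rw [harith]
      exact heven.pow_nonneg _
    have halign : 0 ≤ Real.log (rhoF α β sl true) * Real.log (rhoF α β sr true) := by
      obtain ⟨hp1, hn1⟩ := rhoF_log_sign α β sl hα hαβ hsl1 hsl2 hsl3
      obtain ⟨hp2, hn2⟩ := rhoF_log_sign α β sr hα hαβ hsr1 hsr2 hsr3
      rcases le_total 0 sl with hs | hs <;> rcases le_total 0 sr with hs' | hs'
      · exact mul_nonneg (hp1 hs) (hp2 hs')
      · have h0 : sl * sr = 0 :=
          le_antisymm (mul_nonpos_of_nonneg_of_nonpos hs hs') hss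
        rcases mul_eq_zero.1 h0 with h | h
        · rw [le_antisymm (hn1 h.le) (hp1 h.ge)]; simp
        · rw [le_antisymm (hn2 h.le) (hp2 h.ge)]; simp
      · have h0 : sl * sr = 0 :=
          le_antisymm (mul_nonpos_of_nonpos_of_nonneg hs hs') hss
        rcases mul_eq_zero.1 h0 with h | h
        · rw [le_antisymm (hn1 h.le) (hp1 h.ge)]; simp
        · rw [le_antisymm (hn2 h.le) (hp2 h.ge)]; simp
      · nlinarith [hn1 hs, hn2 hs']
    have habs : |Real.log (rhoF α β sl true) + Real.log (rhoF α β sr true)|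
        = |Real.log (rhoF α β sl true)| + |Real.log (rhoF α β sr true)| :=
      abs_add_of_mul_nonneg halign
    have hMl_le : maxInfl α β p (S.filter (· ≤ tl))
        ≤ ((|Real.log (rhoF α β sl true)| : ℝ) : EReal) := by
      apply iSup_le
      intro g
      rw [hpwSl g]
      exact EReal.coe_le_coe_iff.2 (rhoF_dom α β sl hα hαβ hsl1 hsl2 hsl3 (g tl))
    have hMr_le : maxInfl α β p (S.filter (tr ≤ ·))
        ≤ ((|Real.log (rhoF α β sr true)| : ℝ) : EReal) := by
      apply iSup_le
      intro g
      rw [hpwSr g]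
      exact EReal.coe_le_coe_iff.2 (rhoF_dom α β sr hα hαβ hsr1 hsr2 hsr3 (g tr))
    have hge : maxInfl α β p (S.filter (· ≤ tl)) + maxInfl α β p (S.filter (tr ≤ ·))
        ≤ maxInfl α β p S := by
      calc maxInfl α β p (S.filter (· ≤ tl)) + maxInfl α β p (S.filter (tr ≤ ·))
          ≤ ((|Real.log (rhoF α β sl true)| : ℝ) : EReal)
            + ((|Real.log (rhoF α β sr true)| : ℝ) : EReal) := add_le_add hMl_le hMr_le
        _ = ((|Real.log (rhoF α β sl true)| + |Real.log (rhoF α β sr true)| : ℝ) : EReal) :=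
            (EReal.coe_add _ _).symm
        _ = ((|Real.log (rhoF α β sl true) + Real.log (rhoF α β sr true)| : ℝ) : EReal) := by
            rw [habs]
        _ = pwInfl α β p S (fun _ => true) := (hpwS (fun _ => true)).symm
        _ ≤ maxInfl α β p S := le_iSup (fun g => pwInfl α β p S g) _
    exact le_antisymm hle hge
end
end

section
/- If α + β ≠ 1, the sequence (i_high(Δ))_{Δ≥1} is strictly decreasing: i_high(Δ+1) < i_high(Δ) for every integer Δ ≥ 1. Consequently, for every ε > 0 there is a smallest positive integer Δ*(ε) with i_high(Δ*(ε)) ≤ ε, and for any integer Δ ≥ 1, i_high(Δ) ≤ ε if and only if Δ ≥ Δ*(ε). -/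
open Finset
open scoped Classical

noncomputable section

lemma aux_abs_log_eq (y : ℝ) (hy : 0 < y) : |Real.log y| = Real.log (max y y⁻¹) := by
  rcases le_total 1 y with h | h
  · rw [max_eq_left (le_trans (inv_le_one_of_one_le₀ h) h), abs_of_nonneg (Real.log_nonneg h)]
  · rw [max_eq_right (le_trans h ((one_le_inv₀ hy).2 h)), Real.log_inv,
      abs_of_nonpos (Real.log_nonpos hy.le h)]

lemma aux_abs_log_lt {x y : ℝ} (hx : 0 < x) (hy : 0 < y)
    (h1 : y < max x x⁻¹) (h2 : y⁻¹ < max x x⁻¹) : |Real.log y| < |Real.log x| := by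
  rw [aux_abs_log_eq x hx, aux_abs_log_eq y hy]
  exact Real.log_lt_log (lt_max_of_lt_left hy) (max_lt h1 h2)

lemma aux_iHigh_eq (α β : ℝ) (hα : 0 < α) (Δ : ℕ) (h1 : (1-α-β)^Δ < 1) :
    iHigh α β Δ = |Real.log ((α + β * (1-α-β)^Δ) / (α * (1 - (1-α-β)^Δ)))| := by
  unfold iHigh
  congr 2
  rw [div_eq_div_iff (by linarith) (by nlinarith)]
  field_simp

set_option maxHeartbeats 1000000 in
lemma aux_decr (α β : ℝ) (hα : 0 < α) (hαβ : α ≤ β) (hβ : β < 1) (hne : α + β ≠ 1) :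
    ∀ Δ : ℕ, 1 ≤ Δ → iHigh α β (Δ + 1) < iHigh α β Δ := by
  intro Δ hΔ
  set g : ℝ := 1 - α - β with hg
  have hβ0 : 0 < β := lt_of_lt_of_le hα hαβ
  have hgabs : |g| < 1 := by rw [abs_lt]; constructor <;> [skip; skip] <;> simp [hg] <;> linarith
  have hg0 : g ≠ 0 := fun h => hne (by simp [hg] at h; linarith)
  set x : ℝ := g ^ Δ with hx
  set y : ℝ := g ^ (Δ + 1) with hy
  have hyx : y = g * x := by rw [hy, hx, pow_succ]; ring
  clear_value x y
  have hxabs : |x| ≤ |g| := by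
    rw [hx, abs_pow]
    simpa using pow_le_pow_of_le_one (abs_nonneg g) hgabs.le hΔ
  have hyabs : |y| ≤ |g| := by
    rw [hyx, abs_mul]
    nlinarith [abs_nonneg g, abs_nonneg x]
  have hxlt : |x| < 1 := lt_of_le_of_lt hxabs hgabs
  have hylt : |y| < 1 := lt_of_le_of_lt hyabs hgabs
  have hx1 : x < 1 := lt_of_le_of_lt (le_abs_self x) hxlt
  have hy1 : y < 1 := lt_of_le_of_lt (le_abs_self y) hylt
  have hx1' : -1 < x := by have := neg_abs_le x; linarith [(abs_lt.1 hxlt).1]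
  have hy1' : -1 < y := by have := neg_abs_le y; linarith [(abs_lt.1 hylt).1]
  have hx0 : x ≠ 0 := by rw [hx]; exact pow_ne_zero _ hg0
  have hQ : 0 < α * (1 - x) := by nlinarith
  have hQ' : 0 < α * (1 - y) := by nlinarith
  rw [aux_iHigh_eq α β hα Δ (by rw [← hg, ← hx]; linarith),
      aux_iHigh_eq α β hα (Δ+1) (by rw [← hg, ← hy]; linarith)]
  rw [← hg, ← hx, ← hy]
  rcases lt_trichotomy g 0 with hgneg | h0 | hgpos
  · -- g < 0 : set s := -g, so g = -s, 0 < s < 1, and β*s < α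
    set s : ℝ := -g with hsdef
    have hs0 : 0 < s := by linarith
    have hgabs' : |g| = s := by rw [abs_of_neg hgneg]
    have hs1 : s < 1 := hgabs' ▸ hgabs
    have hseq : s = α + β - 1 := by simp [hsdef, hg]; ring
    have hβs : β * s < α := by rw [hseq]; nlinarith [(1-β)*(α+β)]
    have hxabs' : |x| ≤ s := hgabs' ▸ hxabs
    have hP : 0 < α + β * x := by nlinarith [neg_abs_le x, hxabs']
    have hP' : 0 < α + β * y := by nlinarith [neg_abs_le y, hgabs' ▸ hyabs]
    have hy' : y = -(s * x) := by rw [hyx]; simp only [hsdef]; ring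
    rcases hx0.lt_or_gt with hxneg | hxpos
    · -- x < 0, y > 0
      have hypos : 0 < y := by rw [hy']; nlinarith
      apply aux_abs_log_lt (div_pos hP hQ) (div_pos hP' hQ')
      · apply lt_max_of_lt_right
        rw [inv_div, div_lt_div_iff₀ hQ' hP]
        have h1 : 0 < α * (1 - s) - (β - α) * s * x := by nlinarith
        have h2 : (α + β) * x * (α * (1 - s) - (β - α) * s * x) < 0 :=
          mul_neg_of_neg_of_pos (mul_neg_of_pos_of_neg (by linarith) hxneg) h1
        rw [hy']; nlinarith [h2]
      · apply lt_max_of_lt_right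
        rw [inv_div, inv_div]
        calc α * (1 - y) / (α + β * y) < 1 := by
              rw [div_lt_one hP']; nlinarith
          _ < α * (1 - x) / (α + β * x) := by
              rw [lt_div_iff₀ hP]; nlinarith
    · -- x > 0, y < 0
      have hyneg : y < 0 := by rw [hy']; nlinarith
      apply aux_abs_log_lt (div_pos hP hQ) (div_pos hP' hQ')
      · apply lt_max_of_lt_left
        calc (α + β * y) / (α * (1 - y)) < 1 := by
              rw [div_lt_one hQ']; nlinarith
          _ < (α + β * x) / (α * (1 - x)) := by
              rw [lt_div_iff₀ hQ]; nlinarith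
      · apply lt_max_of_lt_left
        rw [inv_div, div_lt_div_iff₀ hP' hQ]
        have h1 : (β - α) * s * x < α * (1 - s) := by nlinarith
        have h2 : 0 < (α + β) * x * (α * (1 - s) - (β - α) * s * x) :=
          mul_pos (mul_pos (by linarith) hxpos) (by linarith)
        rw [hy']; nlinarith [h2]
  · exact absurd h0 hg0
  · -- g > 0 : x > 0, y > 0, y < x
    have hxpos : 0 < x := by rw [hx]; positivity
    have hypos : 0 < y := by rw [hy]; positivity
    have hyltx : y < x := by rw [hyx]; nlinarith [hgabs, abs_of_pos hgpos]
    have hP : 0 < α + β * x := by nlinarith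
    have hP' : 0 < α + β * y := by nlinarith
    apply aux_abs_log_lt (div_pos hP hQ) (div_pos hP' hQ')
    · apply lt_max_of_lt_left
      rw [div_lt_div_iff₀ hQ' hQ]
      nlinarith [mul_pos hα (mul_pos (show (0:ℝ) < α + β by linarith) (show (0:ℝ) < x - y by linarith))]
    · apply lt_max_of_lt_left
      rw [inv_div]
      calc α * (1 - y) / (α + β * y) < 1 := by
            rw [div_lt_one hP']; nlinarith
        _ < (α + β * x) / (α * (1 - x)) := by
            rw [lt_div_iff₀ hQ]; nlinarith
lemma aux_tendsto (α β : ℝ) (hα : 0 < α) (hαβ : α ≤ β) (hβ : β < 1) :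
    Filter.Tendsto (fun Δ : ℕ => iHigh α β Δ) Filter.atTop (nhds 0) := by
  have hβ0 : 0 < β := lt_of_lt_of_le hα hαβ
  have hgabs : |1 - α - β| < 1 := by rw [abs_lt]; constructor <;> linarith
  have h1 : Filter.Tendsto (fun Δ : ℕ => (1 - α - β) ^ Δ) Filter.atTop (nhds 0) :=
    tendsto_pow_atTop_nhds_zero_of_abs_lt_one hgabs
  have h2 : Filter.Tendsto
      (fun Δ : ℕ => (1 + (β / α) * (1 - α - β) ^ Δ) / (1 - (1 - α - β) ^ Δ))
      Filter.atTop (nhds 1) := by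
    have hnum : Filter.Tendsto (fun Δ : ℕ => 1 + (β / α) * (1 - α - β) ^ Δ)
        Filter.atTop (nhds 1) := by
      simpa using Filter.Tendsto.add (tendsto_const_nhds (x := (1:ℝ))) (h1.const_mul (β / α))
    have hden : Filter.Tendsto (fun Δ : ℕ => 1 - (1 - α - β) ^ Δ)
        Filter.atTop (nhds 1) := by
      simpa using Filter.Tendsto.sub (tendsto_const_nhds (x := (1:ℝ))) h1
    have h := hnum.div hden one_ne_zero
    rw [div_one] at h
    exact h
  have h3 := (Real.continuousAt_log one_ne_zero).tendsto.comp h2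
  have h4 := h3.abs
  simp only [Function.comp, Real.log_one, abs_zero] at h4
  exact h4

/-- If `α + β ≠ 1`, the sequence `(i_high(Δ))_{Δ≥1}` is strictly
decreasing; consequently for every `ε > 0` there is a smallest positive integer `Δ*(ε)`
with `i_high(Δ*(ε)) ≤ ε`, and for positive integers `Δ`, `i_high(Δ) ≤ ε ↔ Δ ≥ Δ*(ε)`. -/
theorem statement13 (α β : ℝ) (hα : 0 < α) (hαβ : α ≤ β) (hβ : β < 1)
    (hne : α + β ≠ 1) :
    (∀ Δ : ℕ, 1 ≤ Δ → iHigh α β (Δ + 1) < iHigh α β Δ) ∧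
    (∀ ε : ℝ, 0 < ε → ∃ D : ℕ,
      IsLeast {Δ : ℕ | 0 < Δ ∧ iHigh α β Δ ≤ ε} D ∧
      ∀ Δ : ℕ, 1 ≤ Δ → (iHigh α β Δ ≤ ε ↔ D ≤ Δ)) := by
  have hdecr := aux_decr α β hα hαβ hβ hne
  refine ⟨hdecr, ?_⟩
  intro ε hε
  have hanti : ∀ m n : ℕ, 1 ≤ m → m ≤ n → iHigh α β n ≤ iHigh α β m := by
    intro m n hm hmn
    induction hmn with
    | refl => exact le_rfl
    | step hk ih => exact le_trans (le_of_lt (hdecr _ (le_trans hm hk))) ih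
  have hlim := aux_tendsto α β hα hαβ hβ
  have hev : ∀ᶠ Δ in Filter.atTop, iHigh α β Δ < ε := hlim.eventually_lt_const hε
  obtain ⟨N, hN⟩ := Filter.eventually_atTop.mp hev
  have hne' : {Δ : ℕ | 0 < Δ ∧ iHigh α β Δ ≤ ε}.Nonempty :=
    ⟨max N 1, lt_of_lt_of_le Nat.zero_lt_one (le_max_right N 1),
      (hN _ (le_max_left N 1)).le⟩
  have hD := Nat.sInf_mem hne'
  refine ⟨sInf {Δ : ℕ | 0 < Δ ∧ iHigh α β Δ ≤ ε},
    ⟨hD, fun n hn => Nat.sInf_le hn⟩, ?_⟩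
  intro Δ hΔ
  constructor
  · intro h
    exact Nat.sInf_le ⟨by omega, h⟩
  · intro h
    exact le_trans (hanti _ _ hD.1 h) hD.2
end
end

section
/- For all reals 0 < α ≤ β < 1 and every integer Δ ≥ 1, it holds that i_low(Δ) ≤ i_high(Δ). -/
open Finset
open scoped Classical

noncomputable section

/-- For all `0 < α ≤ β < 1` and every `Δ ≥ 1`,
`i_low(Δ) ≤ i_high(Δ)`. -/
theorem statement18 (α β : ℝ) (hα : 0 < α) (hαβ : α ≤ β) (hβ : β < 1)
    (Δ : ℕ) (hΔ : 1 ≤ Δ) :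
    iLow α β Δ ≤ iHigh α β Δ := by
  have hβ0 : 0 < β := lt_of_lt_of_le hα hαβ
  unfold iLow iHigh
  set ρ := (1 - α - β) ^ Δ with hρ
  have habs : |1 - α - β| < 1 := by
    rw [abs_lt]; constructor <;> nlinarith
  have hρlt : |ρ| < 1 := by
    rw [hρ, abs_pow]
    exact pow_lt_one₀ (abs_nonneg _) habs (by omega)
  have hρlt' := abs_lt.mp hρlt
  have hden : 0 < 1 - ρ := by linarith [hρlt'.2]
  have hcd : α / β ≤ β / α := by
    rw [div_le_div_iff₀ hβ0 hα]; nlinarith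
  have hc0 : 0 ≤ α / β := le_of_lt (div_pos hα hβ0)
  have hd0 : 0 < β / α := div_pos hβ0 hα
  rcases le_or_gt 0 ρ with hρ0 | hρ0
  · -- ρ ≥ 0 : both logs nonneg
    have hnumle : 1 + (α / β) * ρ ≤ 1 + (β / α) * ρ := by nlinarith
    have hr1 : (1 : ℝ) ≤ (1 + (α / β) * ρ) / (1 - ρ) := by
      rw [le_div_iff₀ hden]; nlinarith
    have hr2 : (1 : ℝ) ≤ (1 + (β / α) * ρ) / (1 - ρ) := by
      rw [le_div_iff₀ hden]; nlinarith
    rw [abs_of_nonneg (Real.log_nonneg hr1), abs_of_nonneg (Real.log_nonneg hr2)]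
    apply Real.log_le_log (by linarith)
    exact div_le_div_of_nonneg_right hnumle hden.le
  · -- ρ < 0 : both logs nonpos
    have hbase : 1 - α - β < 0 := by
      by_contra h
      push_neg at h
      exact absurd (pow_nonneg h Δ) (by rw [← hρ]; linarith)
    have hρge : -ρ ≤ α + β - 1 := by
      have h1 : |ρ| ≤ |1 - α - β| ^ 1 := by
        rw [hρ, abs_pow]
        exact pow_le_pow_of_le_one (abs_nonneg _) (le_of_lt habs) hΔ
      rw [pow_one, abs_of_neg hbase] at h1
      have := abs_le.mp h1
      linarith [this.1]
    have hkey : α + β - 1 < α / β := by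
      rw [lt_div_iff₀ hβ0]; nlinarith
    have hβρ : -α < β * ρ := by
      have h2 : -ρ < α / β := lt_of_le_of_lt hρge hkey
      have h3 : -ρ * β < (α / β) * β := mul_lt_mul_of_pos_right h2 hβ0
      rw [div_mul_cancel₀ α (ne_of_gt hβ0)] at h3
      linarith
    have hnh : 0 < 1 + (β / α) * ρ := by
      have : 1 + (β / α) * ρ = (α + β * ρ) / α := by field_simp
      rw [this]
      exact div_pos (by linarith) hα
    have hnumle : 1 + (β / α) * ρ ≤ 1 + (α / β) * ρ := by nlinarith
    have hnl : 0 < 1 + (α / β) * ρ := lt_of_lt_of_le hnh hnumle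
    have hr1 : (1 + (α / β) * ρ) / (1 - ρ) ≤ 1 := by
      rw [div_le_one hden]; nlinarith
    have hr2 : (1 + (β / α) * ρ) / (1 - ρ) ≤ 1 := by
      rw [div_le_one hden]; nlinarith
    have hl1 : Real.log ((1 + (α / β) * ρ) / (1 - ρ)) ≤ 0 :=
      Real.log_nonpos (le_of_lt (div_pos hnl hden)) hr1
    have hl2 : Real.log ((1 + (β / α) * ρ) / (1 - ρ)) ≤ 0 :=
      Real.log_nonpos (le_of_lt (div_pos hnh hden)) hr2
    rw [abs_of_nonpos hl1, abs_of_nonpos hl2, neg_le_neg_iff]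
    apply Real.log_le_log (div_pos hnh hden)
    exact div_le_div_of_nonneg_right hnumle hden.le
end
end
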